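/- arXiv:2509.24268 — 7 statements merged into one kernel-verified Lean document; each statement's English description precedes it below -/
import Mathlib

section
/- Let 1 < p < q and α, β > 0, and define f(t) = (α + t^p)/(β + t^q)^{p/q} for t > 0. If t₀ > 0 satisfies f'(t₀) = 0, then f''(t₀) < 0; in particular every critical point of f on (0,∞) is a strict local maximum of f. -/
open Set

/-! The derivative factors as `f' t = w t * (β - α * t ^ (q - p))` with a positive weight
`w t = p t^(p-1) (β + t^q)^(-p/q-1)` and a strictly decreasing second factor. At a critical
point `t₀` that factor vanishes, so `f'' t₀ = w t₀ * (-(q - p) α t₀^(q-p-1)) < 0`, and `f'`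
changes sign from `+` to `-` at `t₀`: `t₀` is even the strict maximum of `f` on `(0, ∞)`. -/

section PowRatio

variable {p q α β t : ℝ}

noncomputable def powRatioWeight (p q β t : ℝ) : ℝ :=
  p * t ^ (p - 1) * (β + t ^ q) ^ (-(p / q) - 1)

lemma powRatioWeight_pos (hp : 0 < p) (hβ : 0 < β) (ht : 0 < t) :
    0 < powRatioWeight p q β t := by
  unfold powRatioWeight
  positivity

lemma differentiableAt_powRatioWeight (hβ : 0 < β) (ht : 0 < t) :
    DifferentiableAt ℝ (powRatioWeight p q β) t := by
  have hA : 0 < β + t ^ q := by positivity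
  unfold powRatioWeight
  have h1 : DifferentiableAt ℝ (fun s : ℝ => s ^ (p - 1)) t :=
    differentiableAt_id.rpow_const (Or.inl ht.ne')
  have h2 : DifferentiableAt ℝ (fun s : ℝ => (β + s ^ q) ^ (-(p / q) - 1)) t :=
    ((differentiableAt_id.rpow_const (Or.inl ht.ne')).const_add β).rpow_const (Or.inl hA.ne')
  exact (h1.const_mul p).mul h2

lemma hasDerivAt_powRatio (hq : q ≠ 0) (hβ : 0 < β) (ht : 0 < t) :
    HasDerivAt (fun s => (α + s ^ p) / (β + s ^ q) ^ (p / q))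
      (powRatioWeight p q β t * (β - α * t ^ (q - p))) t := by
  have hA : 0 < β + t ^ q := by positivity
  have hN : HasDerivAt (fun s => α + s ^ p) (p * t ^ (p - 1)) t := by
    simpa using (Real.hasDerivAt_rpow_const (p := p) (Or.inl ht.ne')).const_add α
  have hD : HasDerivAt (fun s => (β + s ^ q) ^ (p / q))
      (p / q * (β + t ^ q) ^ (p / q - 1) * (q * t ^ (q - 1))) t := by
    have hA' : HasDerivAt (fun s => β + s ^ q) (q * t ^ (q - 1)) t := by
      simpa using (Real.hasDerivAt_rpow_const (p := q) (Or.inl ht.ne')).const_add β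
    exact (Real.hasDerivAt_rpow_const (Or.inl hA.ne')).comp t hA'
  refine (hN.div hD (Real.rpow_pos_of_pos hA _).ne').congr_deriv ?_
  set A := β + t ^ q with hA_def
  have hB : 0 < A ^ (p / q) := by positivity
  have e1 : A ^ (p / q - 1) = A ^ (p / q) / A := by rw [Real.rpow_sub hA, Real.rpow_one]
  have e2 : A ^ (-(p / q) - 1) = 1 / (A ^ (p / q) * A) := by
    rw [show -(p / q) - 1 = -(p / q + 1) by ring, Real.rpow_neg hA.le, Real.rpow_add hA,
      Real.rpow_one, one_div]
  have e3 : t ^ (q - 1) = t ^ (p - 1) * t ^ (q - p) := by rw [← Real.rpow_add ht]; ring_nf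
  have e4 : t ^ q = t ^ p * t ^ (q - p) := by rw [← Real.rpow_add ht]; ring_nf
  unfold powRatioWeight
  rw [e1, e2, e3]
  field_simp
  rw [hA_def, e4]
  ring

end PowRatio

lemma lt_of_hasDerivAt_pos_of_neg {f f' : ℝ → ℝ} {a t₀ : ℝ} (ht₀ : a < t₀)
    (hf : ∀ t ∈ Ioi a, HasDerivAt f (f' t) t)
    (hpos : ∀ t ∈ Ioo a t₀, 0 < f' t) (hneg : ∀ t ∈ Ioi t₀, f' t < 0)
    {t : ℝ} (ht : a < t) (hne : t ≠ t₀) : f t < f t₀ := by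
  have hcont : ContinuousOn f (Ioi a) := fun x hx => (hf x hx).continuousAt.continuousWithinAt
  rcases hne.lt_or_gt with hlt | hgt
  · have hmono : StrictMonoOn f (Ioc a t₀) :=
      strictMonoOn_of_deriv_pos (convex_Ioc a t₀) (hcont.mono Ioc_subset_Ioi_self)
        fun x hx => by
          rw [interior_Ioc] at hx
          exact (hf x hx.1).deriv ▸ hpos x hx
    exact hmono ⟨ht, hlt.le⟩ ⟨ht₀, le_rfl⟩ hlt
  · have hanti : StrictAntiOn f (Ici t₀) :=
      strictAntiOn_of_deriv_neg (convex_Ici t₀)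
        (hcont.mono fun x hx => ht₀.trans_le hx) fun x hx => by
          rw [interior_Ici] at hx
          exact (hf x (ht₀.trans hx)).deriv ▸ hneg x hx
    exact hanti self_mem_Ici hgt.le hgt

/-- Let `1 < p < q` and `α, β > 0`, and define
`f t = (α + t^p)/(β + t^q)^(p/q)` for `t > 0`.  If `t₀ > 0` satisfies `f'(t₀) = 0`,
then `f''(t₀) < 0`; in particular every critical point of `f` on `(0,∞)` is a strict
local maximum of `f`. -/
theorem statement5 (p q α β : ℝ) (hp : 1 < p) (hpq : p < q) (hα : 0 < α) (hβ : 0 < β)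
    (f : ℝ → ℝ) (hf : ∀ t, 0 < t → f t = (α + t ^ p) / (β + t ^ q) ^ (p / q))
    (t₀ : ℝ) (ht₀ : 0 < t₀) (hcrit : deriv f t₀ = 0) :
    deriv (deriv f) t₀ < 0 ∧
      ∃ δ > 0, ∀ t, 0 < t → t ≠ t₀ → |t - t₀| < δ → f t < f t₀ := by
  set w := powRatioWeight p q β
  set g : ℝ → ℝ := fun t => β - α * t ^ (q - p)
  have hw : ∀ t, 0 < t → 0 < w t := fun t ht => powRatioWeight_pos (by linarith) hβ ht
  have hfd : ∀ t ∈ Ioi 0, HasDerivAt f (w t * g t) t := fun t ht =>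
    (hasDerivAt_powRatio (by linarith) hβ ht).congr_of_eventuallyEq
      (Filter.eventually_of_mem (Ioi_mem_nhds ht) hf)
  have hg_anti : StrictAntiOn g (Ioi 0) := fun x hx y _ hxy => by
    have := Real.rpow_lt_rpow (le_of_lt hx) hxy (sub_pos.2 hpq)
    simp only [g]; nlinarith
  have hg₀ : g t₀ = 0 := by
    rw [(hfd t₀ ht₀).deriv] at hcrit
    exact (mul_eq_zero.1 hcrit).resolve_left (hw t₀ ht₀).ne'
  refine ⟨?_, 1, one_pos, fun t ht hne _ => ?_⟩
  · have hg' : HasDerivAt g (-(α * ((q - p) * t₀ ^ (q - p - 1)))) t₀ := by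
      simpa using ((Real.hasDerivAt_rpow_const (Or.inl ht₀.ne')).const_mul α).const_sub β
    have hφ := (differentiableAt_powRatioWeight (p := p) (q := q) hβ ht₀).hasDerivAt.mul hg'
    have hf' : deriv f =ᶠ[nhds t₀] w * g :=
      Filter.eventually_of_mem (Ioi_mem_nhds ht₀) fun t ht => (hfd t ht).deriv
    rw [hf'.deriv_eq, hφ.deriv, hg₀, mul_zero, zero_add]
    have hqp := sub_pos.2 hpq
    exact mul_neg_of_pos_of_neg (hw t₀ ht₀) (neg_neg_of_pos (by positivity))
  · refine lt_of_hasDerivAt_pos_of_neg ht₀ hfd (fun x hx => ?_) (fun x hx => ?_) ht hne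
    · exact mul_pos (hw x hx.1) (hg₀ ▸ hg_anti hx.1 ht₀ hx.2)
    · exact mul_neg_of_pos_of_neg (hw x (ht₀.trans hx)) (hg₀ ▸ hg_anti ht₀ (ht₀.trans hx) hx)
end

section
/- Let 1 < p < q and let k, l ≥ 0 be integers with k + l ≥ 2. Define H on (0,∞)^k × (0,∞)^l by H(a,b) = (Σ_{i=1}^k a_i^p + (1/2)Σ_{j=1}^l b_j^p) / (Σ_{i=1}^k a_i^q + (1/2)Σ_{j=1}^l b_j^q)^{p/q}. Then at every point (a,b) with all coordinates positive: (a) if ∂H/∂a_i(a,b) = 0 then ∂²H/∂a_i²(a,b) < 0; (b) if ∂H/∂b_j(a,b) = 0 then ∂²H/∂b_j²(a,b) < 0; (c) if ∇H(a,b) = 0 then ⟨ξ, ∇²H(a,b)·ξ⟩ < 0 for every nonzero vector ξ ∈ ℝ^{k+l} that is not parallel to (a,b). -/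
open Set

/-- The balance function
`H(a,b) = (Σ aᵢ^p + ½ Σ bⱼ^p) / (Σ aᵢ^q + ½ Σ bⱼ^q)^{p/q}`. -/
noncomputable def Hfun (p q : ℝ) {k l : ℕ} (a : Fin k → ℝ) (b : Fin l → ℝ) : ℝ :=
  ((∑ i, a i ^ p) + (1 / 2) * ∑ j, b j ^ p) /
    ((∑ i, a i ^ q) + (1 / 2) * ∑ j, b j ^ q) ^ (p / q)

/-!
Write `H = N / D ^ (p / q)` with `N = Σ wᵢ xᵢ ^ p` and `D = Σ wᵢ xᵢ ^ q`, the weights being `1`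
on the `a`- and `1/2` on the `b`-coordinates, and restrict `H` to a line `x + t ξ`. At a critical
point of the restriction its second derivative is
`(N'' D + (1 - p/q) N' D' - (p/q) N D'') / D ^ (p/q + 1)`.
A vanishing partial derivative in the coordinate `i` means `xᵢ ^ (p-2) D = N xᵢ ^ (q-2)`. Using
this, the numerator becomes `-p (q - p) wᵢ xᵢ ^ (p-2) (D - wᵢ xᵢ ^ q)` in the coordinate direction,
which is negative because some other coordinate contributes to `D`. When all partial derivatives
vanish, it becomes `-p (q - p) (N / D) (D B - S ^ 2)` in a general direction, where, with the
weights `vᵢ = wᵢ xᵢ ^ (q-2)`, `D = Σ vᵢ xᵢ ^ 2`, `B = Σ vᵢ ξᵢ ^ 2` and `S = Σ vᵢ xᵢ ξᵢ`; by the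
strict Cauchy–Schwarz inequality this is negative unless `ξ` is parallel to `x`.
-/

open Real Filter Topology

lemma hasDerivAt_div_rpow {N D : ℝ → ℝ} {N' D' r t : ℝ} (hN : HasDerivAt N N' t)
    (hD : HasDerivAt D D' t) (hD₀ : 0 < D t) :
    HasDerivAt (fun s => N s / D s ^ r) ((N' * D t - r * N t * D') / D t ^ (r + 1)) t := by
  refine (hN.div (hD.rpow_const (p := r) (Or.inl hD₀.ne'))
    (rpow_pos_of_pos hD₀ r).ne').congr_deriv ?_
  rw [rpow_add_one hD₀.ne', rpow_sub_one hD₀.ne']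
  field_simp

/-- At a critical point the quotient rule for `g' = M / D ^ (r + 1)` loses the term carrying
`M = N' D - r N D'`. -/
lemma deriv_deriv_div_rpow_of_crit {N D N' D' : ℝ → ℝ} {N'' D'' r t : ℝ}
    (hN : ∀ᶠ s in 𝓝 t, HasDerivAt N (N' s) s) (hD : ∀ᶠ s in 𝓝 t, HasDerivAt D (D' s) s)
    (hN' : HasDerivAt N' N'' t) (hD' : HasDerivAt D' D'' t) (hD₀ : 0 < D t)
    (hcrit : N' t * D t = r * N t * D' t) :
    deriv (deriv fun s => N s / D s ^ r) t
      = (N'' * D t + (1 - r) * N' t * D' t - r * N t * D'') / D t ^ (r + 1) := by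
  have hNt := hN.self_of_nhds
  have hDt := hD.self_of_nhds
  have hDpos : ∀ᶠ s in 𝓝 t, 0 < D s :=
    continuousAt_const.eventually_lt hDt.continuousAt hD₀
  have hderiv : deriv (fun s => N s / D s ^ r)
      =ᶠ[𝓝 t] fun s => (N' s * D s - r * N s * D' s) / D s ^ (r + 1) := by
    filter_upwards [hN, hD, hDpos] with s hNs hDs hs using (hasDerivAt_div_rpow hNs hDs hs).deriv
  rw [hderiv.deriv_eq]
  have hM := (hN'.fun_mul hDt).fun_sub ((hNt.const_mul r).fun_mul hD')
  have hE := hDt.rpow_const (p := r + 1) (Or.inl hD₀.ne')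
  rw [(hM.fun_div hE (rpow_pos_of_pos hD₀ _).ne').deriv, hcrit]
  have : D t ^ (r + 1) ≠ 0 := (rpow_pos_of_pos hD₀ _).ne'
  field_simp
  ring

lemma rpow_sub_one_eq_rpow_sub_two_mul {x : ℝ} (hx : 0 < x) (r : ℝ) :
    x ^ (r - 1) = x ^ (r - 2) * x := by
  rw [← rpow_add_one hx.ne']; ring_nf

lemma rpow_eq_rpow_sub_two_mul_sq {x : ℝ} (hx : 0 < x) (r : ℝ) :
    x ^ r = x ^ (r - 2) * x ^ 2 := by
  rw [← rpow_natCast, ← rpow_add hx]; norm_num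

lemma sq_sum_mul_lt_sum_mul_sum_of_ne_smul {ι : Type*} [Fintype ι] {v x ξ : ι → ℝ}
    (hv : ∀ i, 0 < v i) (hx : 0 < ∑ i, v i * x i ^ 2) (hξ : ∀ c : ℝ, ξ ≠ c • x) :
    (∑ i, v i * x i * ξ i) ^ 2 < (∑ i, v i * x i ^ 2) * ∑ i, v i * ξ i ^ 2 := by
  set A := ∑ i, v i * x i ^ 2
  set B := ∑ i, v i * ξ i ^ 2
  set S := ∑ i, v i * x i * ξ i
  have hsos : A * (A * B - S ^ 2) = ∑ i, v i * (A * ξ i - S * x i) ^ 2 := by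
    have h i : v i * (A * ξ i - S * x i) ^ 2
        = A ^ 2 * (v i * ξ i ^ 2) - 2 * A * S * (v i * x i * ξ i) + S ^ 2 * (v i * x i ^ 2) := by
      ring
    simp only [h, Finset.sum_add_distrib, Finset.sum_sub_distrib, ← Finset.mul_sum]
    ring
  have hne : ∃ i, A * ξ i - S * x i ≠ 0 := by
    by_contra! h
    refine hξ (S / A) (funext fun i => ?_)
    rw [Pi.smul_apply, smul_eq_mul]
    field_simp
    linear_combination h i
  obtain ⟨i, hi⟩ := hne
  have hpos : 0 < ∑ i, v i * (A * ξ i - S * x i) ^ 2 :=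
    Finset.sum_pos' (fun j _ => mul_nonneg (hv j).le (sq_nonneg _))
      ⟨i, Finset.mem_univ i, mul_pos (hv i) (sq_pos_of_ne_zero hi)⟩
  rw [← hsos] at hpos
  linarith [pos_of_mul_pos_right hpos hx.le]

section Line

variable {ι : Type*}

lemma line_zero (x ξ : ι → ℝ) : (fun i => x i + 0 * ξ i) = x := by
  simp

variable [DecidableEq ι]

lemma update_eq_line (x : ι → ℝ) (i : ι) (t : ℝ) :
    Function.update x i t = fun j => x j + (t - x i) * (Pi.single i 1 : ι → ℝ) j := by
  funext j
  by_cases h : j = i <;> simp [h]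

lemma deriv_comp_update (f : (ι → ℝ) → ℝ) (x : ι → ℝ) (i : ι) :
    deriv (fun t => f (Function.update x i t)) (x i)
      = deriv (fun t => f fun j => x j + t * (Pi.single i 1 : ι → ℝ) j) 0 := by
  simp_rw [update_eq_line]
  set φ : ℝ → ℝ := fun t => f fun j => x j + t * (Pi.single i 1 : ι → ℝ) j
  change deriv (fun t => φ (t - x i)) (x i) = _
  rw [deriv_comp_sub_const, sub_self]

lemma deriv_deriv_comp_update (f : (ι → ℝ) → ℝ) (x : ι → ℝ) (i : ι) :
    deriv (deriv fun t => f (Function.update x i t)) (x i)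
      = deriv (deriv fun t => f fun j => x j + t * (Pi.single i 1 : ι → ℝ) j) 0 := by
  simp_rw [update_eq_line]
  set φ : ℝ → ℝ := fun t => f fun j => x j + t * (Pi.single i 1 : ι → ℝ) j
  change deriv (deriv fun t => φ (t - x i)) (x i) = _
  have h : deriv (fun t => φ (t - x i)) = fun t => deriv φ (t - x i) :=
    funext fun t => deriv_comp_sub_const φ (x i) t
  rw [h, deriv_comp_sub_const, sub_self]

end Line

section Balance

variable {ι : Type*} [Fintype ι]

noncomputable def powerSum (w : ι → ℝ) (r : ℝ) (x : ι → ℝ) : ℝ := ∑ i, w i * x i ^ r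

noncomputable def balance (p q : ℝ) (w x : ι → ℝ) : ℝ :=
  powerSum w p x / powerSum w q x ^ (p / q)

lemma powerSum_pos [Nonempty ι] {w x : ι → ℝ} (hw : ∀ i, 0 < w i) (hx : ∀ i, 0 < x i)
    (r : ℝ) : 0 < powerSum w r x :=
  Finset.sum_pos (fun i _ => mul_pos (hw i) (rpow_pos_of_pos (hx i) r)) Finset.univ_nonempty

lemma hasDerivAt_powerSum_line (w x ξ : ι → ℝ) (r : ℝ) {t : ℝ}
    (hx : ∀ i, 0 < x i + t * ξ i) :
    HasDerivAt (fun s => powerSum w r fun i => x i + s * ξ i)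
      (r * powerSum (fun i => w i * ξ i) (r - 1) fun i => x i + t * ξ i) t := by
  refine (HasDerivAt.fun_sum fun i _ => (((hasDerivAt_mul_const (ξ i)).const_add (x i)).rpow_const
    (p := r) (Or.inl (hx i).ne')).const_mul (w i)).congr_deriv ?_
  rw [powerSum, Finset.mul_sum]
  exact Finset.sum_congr rfl fun i _ => by ring

lemma eventually_pos_line {x ξ : ι → ℝ} (hx : ∀ i, 0 < x i) :
    ∀ᶠ t in 𝓝 (0 : ℝ), ∀ i, 0 < x i + t * ξ i :=
  eventually_all.2 fun i => (continuousAt_const.eventually_lt (by fun_prop) (by simpa using hx i))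

lemma powerSum_mul_single [DecidableEq ι] (w x : ι → ℝ) (i : ι) (r : ℝ) :
    powerSum (fun j => w j * (Pi.single i 1 : ι → ℝ) j) r x = w i * x i ^ r := by
  simp [powerSum, Pi.single_apply]

lemma powerSum_mul_single_sq [DecidableEq ι] (w x : ι → ℝ) (i : ι) (r : ℝ) :
    powerSum (fun j => w j * (Pi.single i 1 : ι → ℝ) j ^ 2) r x = w i * x i ^ r := by
  simp [powerSum, Pi.single_apply]

variable {p q : ℝ} {w x : ι → ℝ}

lemma hasDerivAt_balance_line [Nonempty ι] (hw : ∀ i, 0 < w i) (hx : ∀ i, 0 < x i)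
    (ξ : ι → ℝ) :
    HasDerivAt (fun t => balance p q w fun i => x i + t * ξ i)
      ((p * powerSum (fun i => w i * ξ i) (p - 1) x * powerSum w q x
        - p / q * powerSum w p x * (q * powerSum (fun i => w i * ξ i) (q - 1) x))
        / powerSum w q x ^ (p / q + 1)) 0 := by
  have hx₀ : ∀ i, 0 < x i + 0 * ξ i := by simpa using hx
  have h := hasDerivAt_div_rpow (hasDerivAt_powerSum_line w x ξ p hx₀)
    (hasDerivAt_powerSum_line w x ξ q hx₀) (r := p / q) (by simpa using powerSum_pos hw hx q)
  rwa [line_zero] at h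

lemma deriv_deriv_balance_line_of_crit [Nonempty ι] (hw : ∀ i, 0 < w i) (hx : ∀ i, 0 < x i)
    (ξ : ι → ℝ) (hcrit : p * powerSum (fun i => w i * ξ i) (p - 1) x * powerSum w q x
      = p / q * powerSum w p x * (q * powerSum (fun i => w i * ξ i) (q - 1) x)) :
    deriv (deriv fun t => balance p q w fun i => x i + t * ξ i) 0
      = (p * (p - 1) * powerSum (fun i => w i * ξ i ^ 2) (p - 2) x * powerSum w q x
        + (1 - p / q) * (p * powerSum (fun i => w i * ξ i) (p - 1) x)
          * (q * powerSum (fun i => w i * ξ i) (q - 1) x)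
        - p / q * powerSum w p x * (q * (q - 1) * powerSum (fun i => w i * ξ i ^ 2) (q - 2) x))
        / powerSum w q x ^ (p / q + 1) := by
  have hline := eventually_pos_line (ξ := ξ) hx
  have hx₀ : ∀ i, 0 < x i + 0 * ξ i := by simpa using hx
  have second (r : ℝ) : HasDerivAt (fun t => r * powerSum (fun i => w i * ξ i) (r - 1)
      fun i => x i + t * ξ i) (r * (r - 1) * powerSum (fun i => w i * ξ i ^ 2) (r - 2) x) 0 := by
    refine ((hasDerivAt_powerSum_line _ x ξ (r - 1) hx₀).const_mul r).congr_deriv ?_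
    simp only [zero_mul, add_zero, powerSum, Finset.mul_sum, show r - 1 - 1 = r - 2 by ring]
    exact Finset.sum_congr rfl fun i _ => by ring
  have h := deriv_deriv_div_rpow_of_crit (r := p / q)
    (hline.mono fun t ht => hasDerivAt_powerSum_line w x ξ p ht)
    (hline.mono fun t ht => hasDerivAt_powerSum_line w x ξ q ht) (second p) (second q)
  rw [line_zero] at h
  exact h (powerSum_pos hw hx q) hcrit

variable [DecidableEq ι]

lemma rpow_sub_two_mul_eq_of_deriv_balance_update_eq_zero (hp : p ≠ 0) (hq : q ≠ 0)
    (hw : ∀ i, 0 < w i) (hx : ∀ i, 0 < x i) {i : ι}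
    (hcrit : deriv (fun t => balance p q w (Function.update x i t)) (x i) = 0) :
    x i ^ (p - 2) * powerSum w q x = powerSum w p x * x i ^ (q - 2) := by
  have : Nonempty ι := ⟨i⟩
  rw [deriv_comp_update, (hasDerivAt_balance_line hw hx _).deriv, powerSum_mul_single,
    powerSum_mul_single, div_eq_zero_iff,
    or_iff_left (rpow_pos_of_pos (powerSum_pos hw hx q) _).ne',
    rpow_sub_one_eq_rpow_sub_two_mul (hx i), rpow_sub_one_eq_rpow_sub_two_mul (hx i)] at hcrit
  have h : p * w i * x i * (x i ^ (p - 2) * powerSum w q x - powerSum w p x * x i ^ (q - 2))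
      = 0 := by
    rw [← hcrit]; field_simp
  exact sub_eq_zero.1 <| (mul_eq_zero.1 h).resolve_left <|
    mul_ne_zero (mul_ne_zero hp (hw i).ne') (hx i).ne'

theorem deriv_deriv_balance_update_neg [Nontrivial ι] (hp : 0 < p) (hpq : p < q)
    (hw : ∀ i, 0 < w i) (hx : ∀ i, 0 < x i) {i : ι}
    (hcrit : deriv (fun t => balance p q w (Function.update x i t)) (x i) = 0) :
    deriv (deriv fun t => balance p q w (Function.update x i t)) (x i) < 0 := by
  have hq : 0 < q := hp.trans hpq
  have hc := rpow_sub_two_mul_eq_of_deriv_balance_update_eq_zero hp.ne' hq.ne' hw hx hcrit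
  have hpq' : p / q * q = p := div_mul_cancel₀ p hq.ne'
  rw [deriv_deriv_comp_update, deriv_deriv_balance_line_of_crit hw hx _ ?crit]
  case crit =>
    rw [powerSum_mul_single, powerSum_mul_single, rpow_sub_one_eq_rpow_sub_two_mul (hx i),
      rpow_sub_one_eq_rpow_sub_two_mul (hx i)]
    linear_combination p * w i * x i * hc - powerSum w p x * w i * x i ^ (q - 2) * x i * hpq'
  rw [powerSum_mul_single, powerSum_mul_single, powerSum_mul_single_sq, powerSum_mul_single_sq]
  refine div_neg_of_neg_of_pos ?_ (rpow_pos_of_pos (powerSum_pos hw hx q) _)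
  obtain ⟨j, hji⟩ := exists_ne i
  have hrest : w i * x i ^ q < powerSum w q x :=
    Finset.single_lt_sum hji (Finset.mem_univ i) (Finset.mem_univ j)
      (mul_pos (hw j) (rpow_pos_of_pos (hx j) q))
      fun k _ _ => (mul_pos (hw k) (rpow_pos_of_pos (hx k) q)).le
  rw [rpow_sub_one_eq_rpow_sub_two_mul (hx i), rpow_sub_one_eq_rpow_sub_two_mul (hx i)]
  rw [rpow_eq_rpow_sub_two_mul_sq (hx i)] at hrest
  have hu := rpow_pos_of_pos (hx i) (p - 2)
  have hqp : (1 - p / q) * q = q - p := by field_simp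
  set u := x i ^ (p - 2)
  set v := x i ^ (q - 2)
  have key : p * (p - 1) * (w i * u) * powerSum w q x
        + (1 - p / q) * (p * (w i * (u * x i))) * (q * (w i * (v * x i)))
        - p / q * powerSum w p x * (q * (q - 1) * (w i * v))
      = -(p * (q - p) * w i * u * (powerSum w q x - w i * (v * x i ^ 2))) := by
    linear_combination p * (q - 1) * w i * hc + p * w i ^ 2 * u * v * x i ^ 2 * hqp
      - powerSum w p x * (q - 1) * w i * v * hpq'
  rw [key, neg_lt_zero]
  have := hw i
  have : 0 < q - p := sub_pos.2 hpq
  have : 0 < powerSum w q x - w i * (v * x i ^ 2) := sub_pos.2 hrest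
  positivity

theorem deriv_deriv_balance_line_neg [Nonempty ι] (hp : 0 < p) (hpq : p < q)
    (hw : ∀ i, 0 < w i) (hx : ∀ i, 0 < x i)
    (hcrit : ∀ i, deriv (fun t => balance p q w (Function.update x i t)) (x i) = 0)
    {ξ : ι → ℝ} (hξ : ∀ c : ℝ, ξ ≠ c • x) :
    deriv (deriv fun t => balance p q w fun i => x i + t * ξ i) 0 < 0 := by
  have hq : 0 < q := hp.trans hpq
  have hc i := rpow_sub_two_mul_eq_of_deriv_balance_update_eq_zero hp.ne' hq.ne' hw hx (hcrit i)
  have hD : 0 < powerSum w q x := powerSum_pos hw hx q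
  have hN : 0 < powerSum w p x := powerSum_pos hw hx p
  set N := powerSum w p x
  set D := powerSum w q x
  have hP1 : powerSum (fun i => w i * ξ i) (p - 1) x * D
      = N * ∑ i, w i * x i ^ (q - 2) * x i * ξ i := by
    simp only [powerSum, Finset.sum_mul, Finset.mul_sum]
    refine Finset.sum_congr rfl fun i _ => ?_
    rw [rpow_sub_one_eq_rpow_sub_two_mul (hx i)]
    linear_combination w i * ξ i * x i * hc i
  have hQ1 : powerSum (fun i => w i * ξ i) (q - 1) x = ∑ i, w i * x i ^ (q - 2) * x i * ξ i :=
    Finset.sum_congr rfl fun i _ => by rw [rpow_sub_one_eq_rpow_sub_two_mul (hx i)]; ring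
  have hP2 : powerSum (fun i => w i * ξ i ^ 2) (p - 2) x * D
      = N * ∑ i, w i * x i ^ (q - 2) * ξ i ^ 2 := by
    simp only [powerSum, Finset.sum_mul, Finset.mul_sum]
    exact Finset.sum_congr rfl fun i _ => by linear_combination w i * ξ i ^ 2 * hc i
  have hQ2 : powerSum (fun i => w i * ξ i ^ 2) (q - 2) x = ∑ i, w i * x i ^ (q - 2) * ξ i ^ 2 :=
    Finset.sum_congr rfl fun i _ => by ring
  have hDA : D = ∑ i, w i * x i ^ (q - 2) * x i ^ 2 :=
    Finset.sum_congr rfl fun i _ => by rw [rpow_eq_rpow_sub_two_mul_sq (hx i)]; ring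
  have hCS := sub_pos.2 (sq_sum_mul_lt_sum_mul_sum_of_ne_smul (v := fun i => w i * x i ^ (q - 2))
    (fun i => mul_pos (hw i) (rpow_pos_of_pos (hx i) _)) (hDA ▸ hD) hξ)
  have hpq' : p / q * q = p := div_mul_cancel₀ p hq.ne'
  have hqp : (1 - p / q) * q = q - p := by field_simp
  set P1 := powerSum (fun i => w i * ξ i) (p - 1) x
  set S := ∑ i, w i * x i ^ (q - 2) * x i * ξ i
  set B := ∑ i, w i * x i ^ (q - 2) * ξ i ^ 2
  rw [← hDA] at hCS
  rw [deriv_deriv_balance_line_of_crit hw hx ξ ?crit, hQ1, hQ2]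
  case crit =>
    rw [hQ1]
    linear_combination p * hP1 - N * S * hpq'
  refine div_neg_of_neg_of_pos (Left.neg_of_mul_neg_left ?_ hD.le) (rpow_pos_of_pos hD _)
  have key : (p * (p - 1) * powerSum (fun i => w i * ξ i ^ 2) (p - 2) x * D
        + (1 - p / q) * (p * P1) * (q * S) - p / q * N * (q * (q - 1) * B)) * D
      = -(p * (q - p) * N * (D * B - S ^ 2)) := by
    linear_combination p * (p - 1) * D * hP2 + p * S * P1 * D * hqp + p * S * (q - p) * hP1
      - (q - 1) * N * B * D * hpq'
  rw [key, neg_lt_zero]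
  have := sub_pos.2 hpq
  positivity

end Balance

noncomputable def hfunWeights (k l : ℕ) : Fin k ⊕ Fin l → ℝ :=
  Sum.elim (fun _ => 1) fun _ => 1 / 2

lemma hfunWeights_pos {k l : ℕ} (s : Fin k ⊕ Fin l) : 0 < hfunWeights k l s := by
  cases s <;> norm_num [hfunWeights]

lemma Hfun_eq_balance (p q : ℝ) {k l : ℕ} (a : Fin k → ℝ) (b : Fin l → ℝ) :
    Hfun p q a b = balance p q (hfunWeights k l) (Sum.elim a b) := by
  simp [Hfun, balance, powerSum, hfunWeights, Fintype.sum_sum_type, Finset.mul_sum]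

lemma Hfun_update_left (p q : ℝ) {k l : ℕ} (a : Fin k → ℝ) (b : Fin l → ℝ) (i : Fin k) :
    (fun t => Hfun p q (Function.update a i t) b)
      = fun t => balance p q (hfunWeights k l) (Function.update (Sum.elim a b) (.inl i) t) := by
  simp only [Hfun_eq_balance, Sum.elim_update_left]

lemma Hfun_update_right (p q : ℝ) {k l : ℕ} (a : Fin k → ℝ) (b : Fin l → ℝ) (j : Fin l) :
    (fun t => Hfun p q a (Function.update b j t))
      = fun t => balance p q (hfunWeights k l) (Function.update (Sum.elim a b) (.inr j) t) := by
  simp only [Hfun_eq_balance, Sum.elim_update_right]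

lemma Hfun_line (p q : ℝ) {k l : ℕ} (a ξa : Fin k → ℝ) (b ξb : Fin l → ℝ) :
    (fun t => Hfun p q (fun i => a i + t * ξa i) fun j => b j + t * ξb j)
      = fun t => balance p q (hfunWeights k l)
          fun s => Sum.elim a b s + t * Sum.elim ξa ξb s := by
  funext t
  rw [Hfun_eq_balance]
  congr 1
  funext s
  cases s <;> rfl

/-- Let `1 < p < q` and `k + l ≥ 2`.  At every point `(a,b)` with all
coordinates positive:
(a) if `∂H/∂aᵢ = 0` then `∂²H/∂aᵢ² < 0`;
(b) if `∂H/∂bⱼ = 0` then `∂²H/∂bⱼ² < 0`;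
(c) if `∇H(a,b) = 0` then `⟨ξ, ∇²H(a,b)·ξ⟩ < 0` for every nonzero `ξ` not parallel
to `(a,b)` (the Hessian quadratic form being expressed as the second derivative of
`t ↦ H((a,b) + t·ξ)` at `t = 0`). -/
theorem statement6 (p q : ℝ) (hp : 1 < p) (hpq : p < q)
    (k l : ℕ) (hkl : 2 ≤ k + l)
    (a : Fin k → ℝ) (b : Fin l → ℝ)
    (ha : ∀ i, 0 < a i) (hb : ∀ j, 0 < b j) :
    ((∀ i : Fin k,
        deriv (fun t => Hfun p q (Function.update a i t) b) (a i) = 0 →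
        deriv (deriv (fun t => Hfun p q (Function.update a i t) b)) (a i) < 0) ∧
     (∀ j : Fin l,
        deriv (fun t => Hfun p q a (Function.update b j t)) (b j) = 0 →
        deriv (deriv (fun t => Hfun p q a (Function.update b j t))) (b j) < 0) ∧
     (((∀ i : Fin k, deriv (fun t => Hfun p q (Function.update a i t) b) (a i) = 0) ∧
       (∀ j : Fin l, deriv (fun t => Hfun p q a (Function.update b j t)) (b j) = 0)) →
       ∀ (ξa : Fin k → ℝ) (ξb : Fin l → ℝ),
         ¬(ξa = 0 ∧ ξb = 0) →
         ¬(∃ c : ℝ, ξa = c • a ∧ ξb = c • b) →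
         deriv (deriv (fun t => Hfun p q (fun i => a i + t * ξa i) (fun j => b j + t * ξb j)))
           0 < 0)) := by
  have hp₀ : 0 < p := one_pos.trans hp
  have hx (s : Fin k ⊕ Fin l) : 0 < Sum.elim a b s := by cases s <;> simp [ha, hb]
  have : Nontrivial (Fin k ⊕ Fin l) := Fintype.one_lt_card_iff_nontrivial.1 (by simp; omega)
  refine ⟨fun i hcrit => ?_, fun j hcrit => ?_, fun ⟨hcA, hcB⟩ ξa ξb _ hpar => ?_⟩
  · rw [Hfun_update_left] at hcrit ⊢
    exact deriv_deriv_balance_update_neg hp₀ hpq hfunWeights_pos hx hcrit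
  · rw [Hfun_update_right] at hcrit ⊢
    exact deriv_deriv_balance_update_neg hp₀ hpq hfunWeights_pos hx hcrit
  · rw [Hfun_line]
    refine deriv_deriv_balance_line_neg hp₀ hpq hfunWeights_pos hx ?_ fun c h => hpar
      ⟨c, funext fun i => congrFun h (.inl i), funext fun j => congrFun h (.inr j)⟩
    rintro (i | j)
    · simpa only [Hfun_update_left, Sum.elim_inl] using hcA i
    · simpa only [Hfun_update_right, Sum.elim_inr] using hcB j
end

section
/- Let n ≥ 1, let 1 < p < q, and let α, β ≥ 0. Let E ⊆ F ⊆ ℝⁿ be measurable sets and let u : ℝⁿ → ℝ be locally Lipschitz with ∫_F(|Du|^p + |u|^p) dx < ∞ and ∫_F|u|^q dx < ∞. Set A = α + ∫_E(|Du|^p + |u|^p) dx and B = β + ∫_E|u|^q dx, and assume A > 0 and B > 0. If |u(x)|^{q−p} ≤ qB/(pA) for almost every x ∈ F∖E, then (α + ∫_F(|Du|^p + |u|^p) dx)/(β + ∫_F|u|^q dx)^{p/q} ≥ A/B^{p/q}; that is, the quotient h(D) = (α + ∫_D(|Du|^p+|u|^p))/(β + ∫_D|u|^q)^{p/q} does not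 decrease when the domain is enlarged from E to F, provided u is sufficiently small on the added region. -/
open MeasureTheory Set

/-! Write `a` and `b` for the integrals of `|Du|^p + |u|^p` and `|u|^q` over `F \ E`. The smallness
hypothesis gives `|u|^q ≤ C |u|^p` on `F \ E` with `C = qB/(pA)`, hence `p A b ≤ q B a`.
Bernoulli's inequality `(1 + t)^r ≤ 1 + r t` for `r = p/q ≤ 1` then bounds
`(B + b)^{p/q} ≤ B^{p/q} (1 + (p/q) b/B)`, and `A (1 + (p/q) b/B) ≤ A + a`. -/

theorem div_rpow_le_add_div_add_rpow {A B a b r : ℝ} (hA : 0 ≤ A) (hB : 0 < B)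
    (hBb : 0 < B + b) (hr₀ : 0 ≤ r) (hr₁ : r ≤ 1) (h : r * A * b ≤ B * a) :
    A / B ^ r ≤ (A + a) / (B + b) ^ r := by
  have hBr : 0 < B ^ r := Real.rpow_pos_of_pos hB r
  have hbB : -1 ≤ b / B := by rw [le_div_iff₀ hB]; linarith
  have hfactor : (B + b) ^ r = B ^ r * (1 + b / B) ^ r := by
    rw [← Real.mul_rpow hB.le (by linarith)]
    congr 1
    field_simp
  have hbernoulli : (1 + b / B) ^ r ≤ 1 + r * (b / B) :=
    rpow_one_add_le_one_add_mul_self hbB hr₀ hr₁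
  have hgain : A * (1 + r * (b / B)) ≤ A + a := by
    have : A * (r * (b / B)) ≤ a := by
      rw [← mul_assoc, mul_div_assoc', div_le_iff₀ hB]
      linarith
    linarith
  rw [div_le_div_iff₀ hBr (Real.rpow_pos_of_pos hBb r), hfactor]
  calc A * (B ^ r * (1 + b / B) ^ r)
      ≤ A * (B ^ r * (1 + r * (b / B))) := by gcongr
    _ = A * (1 + r * (b / B)) * B ^ r := by ring
    _ ≤ (A + a) * B ^ r := by gcongr

theorem integral_abs_rpow_le_mul_integral {X : Type*} [MeasurableSpace X] {μ : Measure X}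
    {u w : X → ℝ} {p q C : ℝ} (hq : q ≠ 0) (hC : 0 ≤ C)
    (hw : ∀ᵐ x ∂μ, |u x| ^ p ≤ w x) (hu : Integrable (fun x => |u x| ^ q) μ)
    (hwint : Integrable w μ) (hsmall : ∀ᵐ x ∂μ, |u x| ^ (q - p) ≤ C) :
    ∫ x, |u x| ^ q ∂μ ≤ C * ∫ x, w x ∂μ := by
  rw [← integral_const_mul]
  refine integral_mono_ae hu (hwint.const_mul C) ?_
  filter_upwards [hw, hsmall] with x hwx hx
  calc |u x| ^ q = |u x| ^ (q - p) * |u x| ^ p := by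
        rw [← Real.rpow_add' (abs_nonneg _) (by simpa using hq), sub_add_cancel]
    _ ≤ C * w x := mul_le_mul hx hwx (Real.rpow_nonneg (abs_nonneg _) p) hC

theorem statement8_general (n : ℕ) (p q α β : ℝ) (hp : 1 < p) (hpq : p < q)
    (E F : Set (EuclideanSpace ℝ (Fin n))) (hEF : E ⊆ F)
    (hE : MeasurableSet E)
    (u : EuclideanSpace ℝ (Fin n) → ℝ)
    (hint1 : IntegrableOn (fun x => ‖gradient u x‖ ^ p + |u x| ^ p) F)
    (hint2 : IntegrableOn (fun x => |u x| ^ q) F)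
    (A B : ℝ)
    (hA : A = α + ∫ x in E, (‖gradient u x‖ ^ p + |u x| ^ p))
    (hB : B = β + ∫ x in E, |u x| ^ q)
    (hA0 : 0 < A) (hB0 : 0 < B)
    (hsmall : ∀ᵐ x ∂(volume.restrict (F \ E)), |u x| ^ (q - p) ≤ q * B / (p * A)) :
    A / B ^ (p / q) ≤
      (α + ∫ x in F, (‖gradient u x‖ ^ p + |u x| ^ p)) /
        (β + ∫ x in F, |u x| ^ q) ^ (p / q) := by
  have hp0 : 0 < p := by linarith
  have hq0 : 0 < q := by linarith
  set a := ∫ x in F \ E, (‖gradient u x‖ ^ p + |u x| ^ p)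
  set b := ∫ x in F \ E, |u x| ^ q
  have hb0 : 0 ≤ b := integral_nonneg fun x => Real.rpow_nonneg (abs_nonneg _) q
  have hba : b ≤ q * B / (p * A) * a :=
    integral_abs_rpow_le_mul_integral hq0.ne' (by positivity)
      (ae_of_all _ fun x => le_add_of_nonneg_left (Real.rpow_nonneg (norm_nonneg _) p))
      (hint2.mono_set sdiff_subset) (hint1.mono_set sdiff_subset) hsmall
  have hsplit {f : EuclideanSpace ℝ (Fin n) → ℝ} (hf : IntegrableOn f F) :
      ∫ x in F, f x = (∫ x in E, f x) + ∫ x in F \ E, f x := by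
    rw [← integral_inter_add_sdiff hE hf, inter_eq_right.mpr hEF]
  rw [hsplit hint1, hsplit hint2, ← add_assoc, ← add_assoc, ← hA, ← hB]
  refine div_rpow_le_add_div_add_rpow hA0.le hB0 (by linarith) (by positivity)
    ((div_le_one hq0).mpr hpq.le) ?_
  rw [div_mul_eq_mul_div, le_div_iff₀ (by positivity)] at hba
  rw [div_mul_eq_mul_div, div_mul_eq_mul_div, div_le_iff₀ hq0]
  linarith

/-- monotonicity of the quotient
`h(D) = (α + ∫_D(|Du|^p+|u|^p))/(β + ∫_D|u|^q)^{p/q}` under enlargement of the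
domain from `E` to `F`, provided `u` is sufficiently small on the added region:
if `|u|^{q−p} ≤ qB/(pA)` a.e. on `F∖E`, then `h(F) ≥ h(E)`. -/
theorem statement8 (n : ℕ) (hn : 1 ≤ n) (p q α β : ℝ) (hp : 1 < p) (hpq : p < q)
    (hα : 0 ≤ α) (hβ : 0 ≤ β)
    (E F : Set (EuclideanSpace ℝ (Fin n))) (hEF : E ⊆ F)
    (hE : MeasurableSet E) (hF : MeasurableSet F)
    (u : EuclideanSpace ℝ (Fin n) → ℝ) (hu : LocallyLipschitz u)
    (hint1 : IntegrableOn (fun x => ‖gradient u x‖ ^ p + |u x| ^ p) F)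
    (hint2 : IntegrableOn (fun x => |u x| ^ q) F)
    (A B : ℝ)
    (hA : A = α + ∫ x in E, (‖gradient u x‖ ^ p + |u x| ^ p))
    (hB : B = β + ∫ x in E, |u x| ^ q)
    (hA0 : 0 < A) (hB0 : 0 < B)
    (hsmall : ∀ᵐ x ∂(volume.restrict (F \ E)), |u x| ^ (q - p) ≤ q * B / (p * A)) :
    A / B ^ (p / q) ≤
      (α + ∫ x in F, (‖gradient u x‖ ^ p + |u x| ^ p)) /
        (β + ∫ x in F, |u x| ^ q) ^ (p / q) :=
  statement8_general n p q α β hp hpq E F hEF hE u hint1 hint2 A B hA hB hA0 hB0 hsmall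
end

section
/- Let n ≥ 2 be an integer and p > 1. Let R₀ ≥ 0 and let w ∈ C²((R₀,∞)) satisfy w(r) > 0 and w'(r) < 0 for all r > R₀, together with the differential inequality |w'(r)|^{p−2}·(w''(r) + ((n−1)/(p−1))·w'(r)/r) ≥ w(r)^{p−1}/p for all r > R₀. Then the function ψ(r) = |w'(r)|^p − w(r)^p/p satisfies ψ'(r) ≤ −(p(n−1)/((p−1)r))·|w'(r)|^p ≤ 0 for all r > R₀; in particular ψ is nonincreasing on (R₀,∞). -/
/-!
Since `w' < 0`, multiplying the differential inequality by `-p w' ≥ 0` bounds the term `-w' w^{p-1}`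
of `ψ' = p |w'|^{p-2} w' w'' - w' w^{p-1}` and cancels the `w''` term, leaving
`ψ' ≤ -(p (n-1) / ((p-1) r)) |w'|^p` because `|w'|^{p-2} w'^2 = |w'|^p`.
Monotonicity then follows from the mean value theorem.
-/

open Set

theorem hasDerivAt_abs_rpow_sub_rpow_div {w w' : ℝ → ℝ} {a b p r : ℝ} (hp : 1 < p)
    (hw : HasDerivAt w a r) (hw' : HasDerivAt w' b r) :
    HasDerivAt (fun s => |w' s| ^ p - w s ^ p / p)
      (p * |w' r| ^ (p - 2) * w' r * b - a * w r ^ (p - 1)) r := by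
  have hp0 : p ≠ 0 := by positivity
  refine (((hasDerivAt_abs_rpow (w' r) hp).comp r hw').sub
    ((hw.rpow_const (Or.inr hp.le)).div_const p)).congr_deriv ?_
  field_simp

theorem mul_abs_rpow_mul_sub_mul_le_of_div_le {a b k p r v : ℝ} (hp : 0 < p) (ha : a ≤ 0)
    (h : v / p ≤ |a| ^ (p - 2) * (b + k * (a / r))) :
    p * |a| ^ (p - 2) * a * b - a * v ≤ -(p * k / r) * |a| ^ p := by
  have habs : |a| ^ p = |a| ^ (p - 2) * a ^ 2 := by
    rw [← sq_abs a, ← Real.rpow_natCast, ← Real.rpow_add' (abs_nonneg a) (by simpa using hp.ne')]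
    norm_num
  have hmul := mul_le_mul_of_nonneg_left h (by nlinarith : 0 ≤ -p * a)
  have hexpand : -p * a * (|a| ^ (p - 2) * (b + k * (a / r))) =
      -(p * |a| ^ (p - 2) * a * b) + -(p * k / r) * (|a| ^ (p - 2) * a ^ 2) := by ring
  have hcancel : -p * a * (v / p) = -(a * v) := by field_simp
  rw [hexpand, hcancel] at hmul
  rw [habs]
  linarith

theorem statement9_general (n : ℕ) (hn : 2 ≤ n) (p : ℝ) (hp : 1 < p) (R₀ : ℝ) (hR₀ : 0 ≤ R₀)
    (w w' w'' : ℝ → ℝ)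
    (hd1 : ∀ r, R₀ < r → HasDerivAt w (w' r) r)
    (hd2 : ∀ r, R₀ < r → HasDerivAt w' (w'' r) r)
    (hneg : ∀ r, R₀ < r → w' r < 0)
    (hode : ∀ r, R₀ < r →
      w r ^ (p - 1) / p ≤ |w' r| ^ (p - 2) * (w'' r + ((n : ℝ) - 1) / (p - 1) * (w' r / r))) :
    (∀ r, R₀ < r →
        deriv (fun s => |w' s| ^ p - w s ^ p / p) r ≤
          -(p * ((n : ℝ) - 1) / ((p - 1) * r)) * |w' r| ^ p ∧
        -(p * ((n : ℝ) - 1) / ((p - 1) * r)) * |w' r| ^ p ≤ 0) ∧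
      AntitoneOn (fun s => |w' s| ^ p - w s ^ p / p) (Ioi R₀) := by
  have hderiv r (hr : R₀ < r) := hasDerivAt_abs_rpow_sub_rpow_div hp (hd1 r hr) (hd2 r hr)
  have hbound r (hr : R₀ < r) :
      p * |w' r| ^ (p - 2) * w' r * w'' r - w' r * w r ^ (p - 1) ≤
        -(p * ((n : ℝ) - 1) / ((p - 1) * r)) * |w' r| ^ p := by
    have := mul_abs_rpow_mul_sub_mul_le_of_div_le (by linarith) (hneg r hr).le (hode r hr)
    rwa [← mul_div_assoc, div_div] at this
  have hnonpos r (hr : R₀ < r) : -(p * ((n : ℝ) - 1) / ((p - 1) * r)) * |w' r| ^ p ≤ 0 := by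
    have hn1 : (0 : ℝ) ≤ (n : ℝ) - 1 := by
      have : (2 : ℝ) ≤ n := by exact_mod_cast hn
      linarith
    have hpr : 0 ≤ (p - 1) * r := mul_nonneg (by linarith) (by linarith)
    rw [neg_mul, neg_nonpos]
    exact mul_nonneg (div_nonneg (mul_nonneg (by linarith) hn1) hpr) (by positivity)
  refine ⟨fun r hr => ⟨(hderiv r hr).deriv ▸ hbound r hr, hnonpos r hr⟩, ?_⟩
  refine antitoneOn_of_hasDerivWithinAt_nonpos (convex_Ioi R₀)
    (f' := fun r => p * |w' r| ^ (p - 2) * w' r * w'' r - w' r * w r ^ (p - 1))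
    (fun r hr => (hderiv r hr).continuousAt.continuousWithinAt) ?_ ?_
  · rw [interior_Ioi]
    exact fun r hr => (hderiv r hr).hasDerivWithinAt
  · rw [interior_Ioi]
    exact fun r hr => (hbound r hr).trans (hnonpos r hr)

/-- Let `n ≥ 2`, `p > 1`, `R₀ ≥ 0` and let `w ∈ C²((R₀,∞))` satisfy
`w > 0`, `w' < 0` on `(R₀,∞)` and the differential inequality
`|w'|^{p−2}·(w'' + ((n−1)/(p−1))·w'/r) ≥ w^{p−1}/p`.  Then
`ψ(r) = |w'(r)|^p − w(r)^p/p` satisfies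
`ψ'(r) ≤ −(p(n−1)/((p−1)r))·|w'(r)|^p ≤ 0` for all `r > R₀`;
in particular `ψ` is nonincreasing on `(R₀,∞)`. -/
theorem statement9 (n : ℕ) (hn : 2 ≤ n) (p : ℝ) (hp : 1 < p) (R₀ : ℝ) (hR₀ : 0 ≤ R₀)
    (w w' w'' : ℝ → ℝ)
    (hd1 : ∀ r, R₀ < r → HasDerivAt w (w' r) r)
    (hd2 : ∀ r, R₀ < r → HasDerivAt w' (w'' r) r)
    (hpos : ∀ r, R₀ < r → 0 < w r)
    (hneg : ∀ r, R₀ < r → w' r < 0)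
    (hode : ∀ r, R₀ < r →
      w r ^ (p - 1) / p ≤ |w' r| ^ (p - 2) * (w'' r + ((n : ℝ) - 1) / (p - 1) * (w' r / r))) :
    (∀ r, R₀ < r →
        deriv (fun s => |w' s| ^ p - w s ^ p / p) r ≤
          -(p * ((n : ℝ) - 1) / ((p - 1) * r)) * |w' r| ^ p ∧
        -(p * ((n : ℝ) - 1) / ((p - 1) * r)) * |w' r| ^ p ≤ 0) ∧
      AntitoneOn (fun s => |w' s| ^ p - w s ^ p / p) (Ioi R₀) :=
  statement9_general n hn p hp R₀ hR₀ w w' w'' hd1 hd2 hneg hode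
end

section
/- Let n ≥ 2 be an integer and p > 1. Let R₀ ≥ 0 and let w ∈ C²((R₀,∞)) satisfy w(r) > 0 and w'(r) < 0 for all r > R₀, the differential inequality |w'(r)|^{p−2}·(w''(r) + ((n−1)/(p−1))·w'(r)/r) ≥ w(r)^{p−1}/p for all r > R₀, and w(r) → 0 as r → ∞. Then ψ(r) = |w'(r)|^p − w(r)^p/p satisfies ψ(r) ≥ 0 for all r > R₀, equivalently w'(r) + p^{−1/p}·w(r) ≤ 0 for all r > R₀; consequently w(r) ≤ w(R)·e^{−p^{−1/p}(r−R)} for all R₀ < R ≤ r. -/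
/-!
With `u = -w' > 0`, the energy `ψ = u ^ p - w ^ p / p` has derivative
`ψ' = u * (w ^ (p - 1) - p * u ^ (p - 2) * w'')`, and the differential inequality (whose
first-order term has the good sign since `w' < 0`) makes this nonpositive. So `ψ` is
nonincreasing, while `ψ ≥ -w ^ p / p → 0`; hence `ψ ≥ 0`, i.e. `u ≥ p ^ (-1/p) * w`.
Then `w * exp (a * r)` with `a = p ^ (-1/p)` is nonincreasing, which is the exponential decay.
-/

open Set Filter Topology

theorem antitoneOn_Ioi_of_hasDerivAt_nonpos {f f' : ℝ → ℝ} {A : ℝ}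
    (hf : ∀ x, A < x → HasDerivAt f (f' x) x) (hf' : ∀ x, A < x → f' x ≤ 0) :
    AntitoneOn f (Ioi A) := by
  refine antitoneOn_of_hasDerivWithinAt_nonpos (f' := f') (convex_Ioi A)
    (fun x hx => (hf x hx).continuousAt.continuousWithinAt) ?_ ?_
  · intro x hx
    rw [interior_Ioi] at hx ⊢
    exact (hf x hx).hasDerivWithinAt
  · intro x hx
    rw [interior_Ioi] at hx
    exact hf' x hx

theorem AntitoneOn.nonneg_of_tendsto_zero_of_le {f g : ℝ → ℝ} {A : ℝ}
    (hf : AntitoneOn f (Ioi A)) (hg : Tendsto g atTop (𝓝 0)) (hgf : ∀ x, A < x → g x ≤ f x)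
    {r : ℝ} (hr : A < r) : 0 ≤ f r := by
  refine le_of_tendsto hg ((eventually_ge_atTop r).mono fun s hrs => ?_)
  have hs : A < s := hr.trans_le hrs
  exact (hgf s hs).trans (hf hr hs hrs)

theorem le_mul_exp_of_hasDerivAt_add_mul_nonpos {w w' : ℝ → ℝ} {A a : ℝ}
    (hw : ∀ x, A < x → HasDerivAt w (w' x) x) (h : ∀ x, A < x → w' x + a * w x ≤ 0)
    {R r : ℝ} (hR : A < R) (hRr : R ≤ r) : w r ≤ w R * Real.exp (-a * (r - R)) := by
  have hderiv : ∀ x, A < x → HasDerivAt (fun s => w s * Real.exp (a * s))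
      ((w' x + a * w x) * Real.exp (a * x)) x := fun x hx => by
    have hexp : HasDerivAt (fun s => Real.exp (a * s)) (Real.exp (a * x) * a) x := by
      simpa using ((hasDerivAt_id x).const_mul a).exp
    exact ((hw x hx).mul hexp).congr_deriv (by ring)
  have hanti := antitoneOn_Ioi_of_hasDerivAt_nonpos hderiv fun x hx =>
    mul_nonpos_of_nonpos_of_nonneg (h x hx) (Real.exp_nonneg _)
  have := hanti hR (hR.trans_le hRr) hRr
  rw [show -a * (r - R) = a * R - a * r by ring, Real.exp_sub, ← mul_div_assoc,
    le_div_iff₀ (Real.exp_pos _)]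
  exact this

theorem rpow_neg_inv_mul_le_of_rpow_div_le {p u v : ℝ} (hp : 0 < p) (hu : 0 ≤ u) (hv : 0 ≤ v)
    (h : v ^ p / p ≤ u ^ p) : p ^ (-p⁻¹) * v ≤ u := by
  have hpow : (p ^ (-p⁻¹) * v) ^ p = v ^ p / p := by
    rw [Real.mul_rpow (by positivity) hv, ← Real.rpow_mul hp.le, neg_mul,
      inv_mul_cancel₀ hp.ne', Real.rpow_neg_one, inv_mul_eq_div]
  rwa [← Real.rpow_le_rpow_iff (by positivity) hu hp, hpow]

theorem hasDerivAt_rpow_neg_sub_rpow_div {w w' : ℝ → ℝ} {d' p r : ℝ} (hp : p ≠ 0)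
    (hw : HasDerivAt w (w' r) r) (hw' : HasDerivAt w' d' r) (hpos : 0 < w r) (hneg : w' r < 0) :
    HasDerivAt (fun s => (-w' s) ^ p - w s ^ p / p)
      (-w' r * (w r ^ (p - 1) - p * (-w' r) ^ (p - 2) * d')) r := by
  refine ((hw'.neg.rpow_const (Or.inl (neg_ne_zero.2 hneg.ne))).sub
    ((hw.rpow_const (Or.inl hpos.ne')).div_const p)).congr_deriv ?_
  have hsplit : (-w' r) ^ (p - 1) = -w' r * (-w' r) ^ (p - 2) := by
    rw [show p - 1 = 1 + (p - 2) by ring, Real.rpow_add (neg_pos.2 hneg), Real.rpow_one]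
  simp only [Pi.neg_apply, hsplit]
  field_simp
  ring

theorem rpow_sub_one_le_of_radial_ineq {c p r v d d' : ℝ} (hc : 0 ≤ c) (hp : 0 < p)
    (hr : 0 < r) (hd : d < 0) (h : v ^ (p - 1) / p ≤ |d| ^ (p - 2) * (d' + c * (d / r))) :
    v ^ (p - 1) ≤ p * (-d) ^ (p - 2) * d' := by
  rw [abs_of_neg hd] at h
  have hdrift : c * (d / r) ≤ 0 :=
    mul_nonpos_of_nonneg_of_nonpos hc (div_nonpos_of_nonpos_of_nonneg hd.le hr.le)
  have hcoef : 0 ≤ (-d) ^ (p - 2) := Real.rpow_nonneg (neg_nonneg.2 hd.le) _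
  have := (div_le_iff₀' hp).1
    (h.trans (mul_le_mul_of_nonneg_left (add_le_of_nonpos_right hdrift) hcoef))
  linarith

/-- Let `n ≥ 2`, `p > 1`, `R₀ ≥ 0` and let `w ∈ C²((R₀,∞))` satisfy
`w > 0`, `w' < 0`, the differential inequality
`|w'|^{p−2}·(w'' + ((n−1)/(p−1))·w'/r) ≥ w^{p−1}/p` on `(R₀,∞)`, and `w(r) → 0`
as `r → ∞`.  Then `ψ(r) = |w'(r)|^p − w(r)^p/p ≥ 0` for all `r > R₀`, equivalently
`w'(r) + p^{−1/p}·w(r) ≤ 0`; consequently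
`w(r) ≤ w(R)·e^{−p^{−1/p}(r−R)}` for all `R₀ < R ≤ r`. -/
theorem statement10 (n : ℕ) (hn : 2 ≤ n) (p : ℝ) (hp : 1 < p) (R₀ : ℝ) (hR₀ : 0 ≤ R₀)
    (w w' w'' : ℝ → ℝ)
    (hd1 : ∀ r, R₀ < r → HasDerivAt w (w' r) r)
    (hd2 : ∀ r, R₀ < r → HasDerivAt w' (w'' r) r)
    (hpos : ∀ r, R₀ < r → 0 < w r)
    (hneg : ∀ r, R₀ < r → w' r < 0)
    (hode : ∀ r, R₀ < r →
      w r ^ (p - 1) / p ≤ |w' r| ^ (p - 2) * (w'' r + ((n : ℝ) - 1) / (p - 1) * (w' r / r)))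
    (hdecay : Tendsto w atTop (nhds 0)) :
    (∀ r, R₀ < r →
        0 ≤ |w' r| ^ p - w r ^ p / p ∧ w' r + p ^ (-p⁻¹) * w r ≤ 0) ∧
      ∀ R r, R₀ < R → R ≤ r → w r ≤ w R * Real.exp (-(p ^ (-p⁻¹)) * (r - R)) := by
  have hp0 : 0 < p := one_pos.trans hp
  have hc : 0 ≤ ((n : ℝ) - 1) / (p - 1) :=
    div_nonneg (by linarith [show (2 : ℝ) ≤ n by exact_mod_cast hn]) (by linarith)
  have hψ : AntitoneOn (fun s => (-w' s) ^ p - w s ^ p / p) (Ioi R₀) :=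
    antitoneOn_Ioi_of_hasDerivAt_nonpos
      (fun r hr => hasDerivAt_rpow_neg_sub_rpow_div hp0.ne' (hd1 r hr) (hd2 r hr) (hpos r hr)
        (hneg r hr))
      (fun r hr => mul_nonpos_of_nonneg_of_nonpos (neg_nonneg.2 (hneg r hr).le) (sub_nonpos.2
        (rpow_sub_one_le_of_radial_ineq hc hp0 (hR₀.trans_lt hr) (hneg r hr) (hode r hr))))
  have hψ_nonneg : ∀ r, R₀ < r → 0 ≤ |w' r| ^ p - w r ^ p / p := fun r hr => by
    have hlim : Tendsto (fun s => -(w s ^ p / p)) atTop (𝓝 0) := by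
      simpa [Real.zero_rpow hp0.ne'] using ((hdecay.rpow_const (Or.inr hp0.le)).div_const p).neg
    rw [abs_of_neg (hneg r hr)]
    refine hψ.nonneg_of_tendsto_zero_of_le hlim (fun s hs => ?_) hr
    linarith [Real.rpow_nonneg (neg_nonneg.2 (hneg s hs).le) p]
  have hslope : ∀ r, R₀ < r → w' r + p ^ (-p⁻¹) * w r ≤ 0 := fun r hr => by
    have := rpow_neg_inv_mul_le_of_rpow_div_le hp0 (neg_nonneg.2 (hneg r hr).le) (hpos r hr).le
      (by simpa [abs_of_neg (hneg r hr)] using hψ_nonneg r hr)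
    linarith
  exact ⟨fun r hr => ⟨hψ_nonneg r hr, hslope r hr⟩,
    fun R r hR hRr => le_mul_exp_of_hasDerivAt_add_mul_nonpos hd1 hslope hR hRr⟩
end

section
/- Let Ω' ⊆ ℝⁿ be a bounded open set, s̄ > 0, 1 < p < q, and let η ∈ C¹((0,∞)) with η' > 0. Let u : (closure of Ω') × [0,T] → (0,∞) be such that u, its spatial gradient Du, its time derivative u_t, and ∂_t(Du) are continuous on (closure of Ω') × [0,T], and u(·,t) ∈ C²(Ω') for each t. Set A(t) = ∫_{Ω'}((s̄+|Du|²)^{p/2} + u^p) dy, B(t) = ∫_{Ω'} u^q dy, and ℰ(t) = η(A(t))/B(t)^{p/q}. Assume that on Ω'×(0,T) the function u satisfies u_t = div((s̄+|Du|²)^{(p−2)/2}Du) + (η(A(t))/(η'(A(t))·B(t)))·u^{q−1} − u^{p−1}, and that for each t ∈ (0,T) the integration-by-parts identity ∫_{Ω'}(s̄+|Du|²)^{(p−2)/2}⟨Du, D(u_t)⟩ dy = −∫_{Ω'} div((s̄+|Du|²)^{(p−2)/2}Du)·u_t dy holds (this encodes the Neumann boundary condition u_ν = 0 on ∂Ω').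 Then for every t ∈ (0,T), ℰ'(t) = −(p·η'(A(t))/B(t)^{p/q})·∫_{Ω'} u_t² dy ≤ 0; in particular ℰ is nonincreasing, i.e. the parabolic equation is a descent gradient flow for the functional ℰ. -/
open MeasureTheory Metric Set Filter

noncomputable section

/-- `ℝⁿ` as a Euclidean space. -/
abbrev Euc (n : ℕ) := EuclideanSpace ℝ (Fin n)

/-- The divergence of a vector field `F : ℝⁿ → ℝⁿ`, as the trace of its derivative. -/
def vdiv (n : ℕ) (F : Euc n → Euc n) (x : Euc n) : ℝ :=
  LinearMap.trace ℝ (Euc n) (fderiv ℝ F x).toLinearMap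

/-!
Write `ℰ = η(A) / B^{p/q}`. Differentiating under the integral sign,
`A' = p ∫ ((s̄+|Du|²)^{(p-2)/2} ⟨Du, Du_t⟩ + u^{p-1} u_t)` and `B' = q ∫ u^{q-1} u_t`.
Integrating by parts and testing the equation against `u_t` turns the integral in `A'` into
`-∫ u_t² + c ∫ u^{q-1} u_t` with `c = η(A) / (η'(A) B)`, and this `c` is exactly the multiplier
for which the `∫ u^{q-1} u_t` terms coming from `A'` and `B'` cancel in `ℰ'`, leaving
`ℰ' = -p η'(A) B^{-p/q} ∫ u_t² ≤ 0`. Since `A`, `B` and hence `ℰ` are continuous on `[0, T]`,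
`ℰ` is antitone there.
-/

open Function Topology
open scoped RealInnerProductSpace

section Continuity

variable {Y E : Type*} [TopologicalSpace Y] [NormedAddCommGroup E] {s : Set Y} {r : ℝ}

theorem ContinuousOn.rpow_const_of_pos {f : Y → ℝ} (hf : ContinuousOn f s)
    (hpos : ∀ y ∈ s, 0 < f y) : ContinuousOn (fun y => f y ^ r) s :=
  hf.rpow_const fun y hy => Or.inl (hpos y hy).ne'

theorem ContinuousOn.const_add_norm_sq_rpow {f : Y → E} {c : ℝ} (hc : 0 < c)
    (hf : ContinuousOn f s) : ContinuousOn (fun y => (c + ‖f y‖ ^ 2) ^ r) s :=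
  (continuousOn_const.add (hf.norm.pow 2)).rpow_const_of_pos fun _ _ =>
    add_pos_of_pos_of_nonneg hc (sq_nonneg _)

end Continuity

section ParametricIntegral

variable {X E : Type*} [TopologicalSpace X] [MeasurableSpace X] [OpensMeasurableSpace X]
  {μ : Measure X} [IsFiniteMeasureOnCompacts μ] [NormedAddCommGroup E]
  {Ω : Set X} {I : Set ℝ}

theorem ContinuousOn.integrableOn_of_isCompact_closure {f : X → E}
    (hΩ : IsCompact (closure Ω)) (hf : ContinuousOn f (closure Ω)) : IntegrableOn f Ω μ :=
  (hf.integrableOn_compact' hΩ isClosed_closure.measurableSet).mono_set subset_closure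

theorem ContinuousOn.integrableOn_slice {F : ℝ → X → E} (hΩ : IsCompact (closure Ω))
    (hF : ContinuousOn (uncurry F) (I ×ˢ closure Ω)) {t : ℝ} (ht : t ∈ I) :
    IntegrableOn (F t) Ω μ :=
  (hF.uncurry_left t ht).integrableOn_of_isCompact_closure hΩ

theorem continuousOn_setIntegral_of_continuousOn_prod [NormedSpace ℝ E] {F : ℝ → X → E}
    (hI : IsCompact I) (hΩ : IsCompact (closure Ω)) (hΩm : MeasurableSet Ω)
    (hF : ContinuousOn (uncurry F) (I ×ˢ closure Ω)) :
    ContinuousOn (fun t => ∫ x in Ω, F t x ∂μ) I := by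
  have : IsFiniteMeasure (μ.restrict Ω) :=
    ⟨by simpa using (measure_mono subset_closure).trans_lt hΩ.measure_lt_top⟩
  obtain ⟨C, hC⟩ := (hI.prod hΩ).exists_bound_of_continuousOn hF
  refine continuousOn_of_dominated (bound := fun _ => C)
    (fun t ht => (hF.integrableOn_slice hΩ ht).aestronglyMeasurable) (fun t ht => ?_)
    (integrable_const C) ?_
  · exact ae_restrict_of_forall_mem hΩm fun x hx => hC (t, x) ⟨ht, subset_closure hx⟩
  · exact ae_restrict_of_forall_mem hΩm fun x hx =>
      hF.uncurry_right x (subset_closure hx)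

theorem hasDerivAt_setIntegral_of_continuousOn_prod [NormedSpace ℝ E] {F F' : ℝ → X → E}
    {t : ℝ} (hI : IsCompact I) (ht : I ∈ 𝓝 t) (hΩ : IsCompact (closure Ω))
    (hΩm : MeasurableSet Ω) (hF : ContinuousOn (uncurry F) (I ×ˢ closure Ω))
    (hF' : ContinuousOn (uncurry F') (I ×ˢ closure Ω))
    (hFF' : ∀ s ∈ I, ∀ x ∈ Ω, HasDerivAt (F · x) (F' s x) s) :
    HasDerivAt (fun s => ∫ x in Ω, F s x ∂μ) (∫ x in Ω, F' t x ∂μ) t := by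
  have : IsFiniteMeasure (μ.restrict Ω) :=
    ⟨by simpa using (measure_mono subset_closure).trans_lt hΩ.measure_lt_top⟩
  obtain ⟨C, hC⟩ := (hI.prod hΩ).exists_bound_of_continuousOn hF'
  have htI : t ∈ I := mem_of_mem_nhds ht
  exact (hasDerivAt_integral_of_dominated_loc_of_deriv_le (bound := fun _ => C) ht
    (eventually_of_mem ht fun s hs => (hF.integrableOn_slice hΩ hs).aestronglyMeasurable)
    (hF.integrableOn_slice hΩ htI) (hF'.integrableOn_slice hΩ htI).aestronglyMeasurable
    (ae_restrict_of_forall_mem hΩm fun x hx s hs => hC (s, x) ⟨hs, subset_closure hx⟩)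
    (integrable_const C) (ae_restrict_of_forall_mem hΩm fun x hx s hs => hFF' s hs x hx)).2

end ParametricIntegral

theorem HasDerivAt.const_add_norm_sq_rpow {F : Type*} [NormedAddCommGroup F]
    [InnerProductSpace ℝ F] {g : ℝ → F} {g' : F} {c r t : ℝ} (hg : HasDerivAt g g' t)
    (hpos : 0 < c + ‖g t‖ ^ 2) :
    HasDerivAt (fun s => (c + ‖g s‖ ^ 2) ^ (r / 2))
      (r * ((c + ‖g t‖ ^ 2) ^ ((r - 2) / 2) * ⟪g t, g'⟫)) t := by
  refine ((hg.norm_sq.const_add c).rpow_const (p := r / 2) (Or.inl hpos.ne')).congr_deriv ?_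
  rw [show r / 2 - 1 = (r - 2) / 2 by ring]
  ring

section Energy

variable {X E : Type*} [TopologicalSpace X] [MeasurableSpace X] [OpensMeasurableSpace X]
  {μ : Measure X} [IsFiniteMeasureOnCompacts μ] [NormedAddCommGroup E]
  {Ω : Set X} {I : Set ℝ} {v w : ℝ → X → ℝ} {G G' : ℝ → X → E} {c r t : ℝ}

theorem continuousOn_setIntegral_const_add_norm_sq_rpow_add_rpow (hc : 0 < c)
    (hI : IsCompact I) (hΩ : IsCompact (closure Ω)) (hΩm : MeasurableSet Ω)
    (hv : ContinuousOn (uncurry v) (I ×ˢ closure Ω))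
    (hG : ContinuousOn (uncurry G) (I ×ˢ closure Ω))
    (hpos : ∀ s ∈ I, ∀ x ∈ closure Ω, 0 < v s x) :
    ContinuousOn (fun s => ∫ x in Ω, ((c + ‖G s x‖ ^ 2) ^ (r / 2) + v s x ^ r) ∂μ) I :=
  continuousOn_setIntegral_of_continuousOn_prod
    (F := fun s x => (c + ‖G s x‖ ^ 2) ^ (r / 2) + v s x ^ r) hI hΩ hΩm
    ((hG.const_add_norm_sq_rpow hc).add (hv.rpow_const_of_pos fun _ hP => hpos _ hP.1 _ hP.2))

theorem hasDerivAt_setIntegral_const_add_norm_sq_rpow_add_rpow [InnerProductSpace ℝ E] (hc : 0 < c)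
    (hI : IsCompact I) (ht : I ∈ 𝓝 t) (hΩ : IsCompact (closure Ω)) (hΩm : MeasurableSet Ω)
    (hv : ContinuousOn (uncurry v) (I ×ˢ closure Ω))
    (hG : ContinuousOn (uncurry G) (I ×ˢ closure Ω))
    (hw : ContinuousOn (uncurry w) (I ×ˢ closure Ω))
    (hG' : ContinuousOn (uncurry G') (I ×ˢ closure Ω))
    (hpos : ∀ s ∈ I, ∀ x ∈ closure Ω, 0 < v s x)
    (hvw : ∀ s ∈ I, ∀ x ∈ Ω, HasDerivAt (v · x) (w s x) s)
    (hGG' : ∀ s ∈ I, ∀ x ∈ Ω, HasDerivAt (G · x) (G' s x) s) :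
    HasDerivAt (fun s => ∫ x in Ω, ((c + ‖G s x‖ ^ 2) ^ (r / 2) + v s x ^ r) ∂μ)
      (r * ((∫ x in Ω, (c + ‖G t x‖ ^ 2) ^ ((r - 2) / 2) * ⟪G t x, G' t x⟫ ∂μ) +
        ∫ x in Ω, v t x ^ (r - 1) * w t x ∂μ)) t := by
  have htI : t ∈ I := mem_of_mem_nhds ht
  have hvr : ∀ r : ℝ, ContinuousOn (uncurry fun s x => v s x ^ r) (I ×ˢ closure Ω) :=
    fun r => hv.rpow_const_of_pos fun _ hP => hpos _ hP.1 _ hP.2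
  have hflux : ContinuousOn (uncurry fun s x =>
      (c + ‖G s x‖ ^ 2) ^ ((r - 2) / 2) * ⟪G s x, G' s x⟫) (I ×ˢ closure Ω) :=
    (hG.const_add_norm_sq_rpow hc).mul (hG.inner hG')
  have hpow : ContinuousOn (uncurry fun s x => v s x ^ (r - 1) * w s x) (I ×ˢ closure Ω) :=
    (hvr _).mul hw
  rw [mul_add, ← integral_const_mul, ← integral_const_mul,
    ← integral_add ((hflux.integrableOn_slice hΩ htI).const_mul r)
      ((hpow.integrableOn_slice hΩ htI).const_mul r)]
  refine hasDerivAt_setIntegral_of_continuousOn_prod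
    (F := fun s x => (c + ‖G s x‖ ^ 2) ^ (r / 2) + v s x ^ r)
    (F' := fun s x => r * ((c + ‖G s x‖ ^ 2) ^ ((r - 2) / 2) * ⟪G s x, G' s x⟫) +
      r * (v s x ^ (r - 1) * w s x)) hI ht hΩ hΩm
    ((hG.const_add_norm_sq_rpow hc).add (hvr r))
    ((continuousOn_const.mul hflux).add (continuousOn_const.mul hpow)) fun s hs x hx => ?_
  exact ((hGG' s hs x hx).const_add_norm_sq_rpow (by positivity)).add
    (((hvw s hs x hx).rpow_const (Or.inl (hpos s hs x (subset_closure hx)).ne')).congr_deriv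
      (by ring))

theorem hasDerivAt_setIntegral_rpow (hI : IsCompact I) (ht : I ∈ 𝓝 t)
    (hΩ : IsCompact (closure Ω)) (hΩm : MeasurableSet Ω)
    (hv : ContinuousOn (uncurry v) (I ×ˢ closure Ω))
    (hw : ContinuousOn (uncurry w) (I ×ˢ closure Ω))
    (hpos : ∀ s ∈ I, ∀ x ∈ closure Ω, 0 < v s x)
    (hvw : ∀ s ∈ I, ∀ x ∈ Ω, HasDerivAt (v · x) (w s x) s) :
    HasDerivAt (fun s => ∫ x in Ω, v s x ^ r ∂μ) (r * ∫ x in Ω, v t x ^ (r - 1) * w t x ∂μ) t := by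
  have hvr : ∀ r : ℝ, ContinuousOn (uncurry fun s x => v s x ^ r) (I ×ˢ closure Ω) :=
    fun r => hv.rpow_const_of_pos fun _ hP => hpos _ hP.1 _ hP.2
  rw [← integral_const_mul]
  refine hasDerivAt_setIntegral_of_continuousOn_prod (F := fun s x => v s x ^ r)
    (F' := fun s x => r * (v s x ^ (r - 1) * w s x)) hI ht hΩ hΩm (hvr r)
    (continuousOn_const.mul ((hvr (r - 1)).mul hw)) fun s hs x hx => ?_
  exact ((hvw s hs x hx).rpow_const (Or.inl (hpos s hs x (subset_closure hx)).ne')).congr_deriv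
    (by ring)

theorem setIntegral_add_mul_eq_of_ibp {k d f g w : X → ℝ} (hΩ : IsCompact (closure Ω))
    (hΩm : MeasurableSet Ω) (heq : ∀ x ∈ Ω, w x = d x + c * g x - f x)
    (hibp : ∫ x in Ω, k x ∂μ = -∫ x in Ω, d x * w x ∂μ)
    (hw : ContinuousOn w (closure Ω)) (hf : ContinuousOn f (closure Ω))
    (hg : ContinuousOn g (closure Ω)) :
    ∫ x in Ω, k x ∂μ + ∫ x in Ω, f x * w x ∂μ =
      -∫ x in Ω, w x ^ 2 ∂μ + c * ∫ x in Ω, g x * w x ∂μ := by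
  have hw2 : IntegrableOn (fun x => w x ^ 2) Ω μ := (hw.pow 2).integrableOn_of_isCompact_closure hΩ
  have hgw : IntegrableOn (fun x => c * (g x * w x)) Ω μ :=
    ((hg.mul hw).integrableOn_of_isCompact_closure hΩ).const_mul c
  have hfw : IntegrableOn (fun x => f x * w x) Ω μ := (hf.mul hw).integrableOn_of_isCompact_closure hΩ
  have hdw : ∫ x in Ω, d x * w x ∂μ = ∫ x in Ω, (w x ^ 2 - c * (g x * w x) + f x * w x) ∂μ :=
    setIntegral_congr_fun hΩm fun x hx => by linear_combination (-w x) * heq x hx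
  have hsub : IntegrableOn (fun x => w x ^ 2 - c * (g x * w x)) Ω μ := hw2.sub hgw
  rw [hibp, hdw, integral_add hsub hfw, integral_sub hw2 hgw, integral_const_mul]
  ring

end Energy

theorem HasDerivAt.comp_div_rpow {f A B : ℝ → ℝ} {f' a b p t : ℝ} (hf : HasDerivAt f f' (A t))
    (hA : HasDerivAt A a t) (hB : HasDerivAt B b t) (hB0 : 0 < B t) :
    HasDerivAt (fun s => f (A s) / B s ^ p) ((f' * a - p * f (A t) * b / B t) / B t ^ p) t := by
  have hBp : 0 < B t ^ p := Real.rpow_pos_of_pos hB0 p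
  refine ((hf.comp t hA).div (hB.rpow_const (p := p) (Or.inl hB0.ne')) hBp.ne').congr_deriv ?_
  rw [Real.rpow_sub_one hB0.ne', comp_apply]
  field_simp

theorem HasDerivAt.comp_div_rpow_of_multiplier {f A B : ℝ → ℝ} {f' p q t I J : ℝ}
    (hf : HasDerivAt f f' (A t)) (hf' : f' ≠ 0)
    (hA : HasDerivAt A (p * (-I + f (A t) / (f' * B t) * J)) t)
    (hB : HasDerivAt B (q * J) t) (hB0 : 0 < B t) (hq : q ≠ 0) :
    HasDerivAt (fun s => f (A s) / B s ^ (p / q)) (-(p * f' / B t ^ (p / q)) * I) t := by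
  refine (hf.comp_div_rpow hA hB hB0).congr_deriv ?_
  field_simp
  ring

theorem statement16_general (n : ℕ)
    (Ω' : Set (Euc n)) (hΩo : IsOpen Ω') (hΩb : Bornology.IsBounded Ω')
    (sbar p q : ℝ) (hs : 0 < sbar) (hp : 1 < p) (hpq : p < q)
    (η : ℝ → ℝ) (hη : ContDiffOn ℝ 1 η (Ioi 0)) (hη' : ∀ t > (0 : ℝ), 0 < deriv η t)
    (T : ℝ)
    (u ut : ℝ → Euc n → ℝ) (Dut : ℝ → Euc n → Euc n)
    (hpos : ∀ t ∈ Icc 0 T, ∀ x ∈ closure Ω', 0 < u t x)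
    (hut : ∀ t ∈ Icc 0 T, ∀ x ∈ closure Ω', HasDerivAt (fun s => u s x) (ut t x) t)
    (hDut : ∀ t ∈ Icc 0 T, ∀ x ∈ closure Ω',
      HasDerivAt (fun s => gradient (u s) x) (Dut t x) t)
    (hcont : ContinuousOn
      (fun P : ℝ × Euc n => (u P.1 P.2, gradient (u P.1) P.2, ut P.1 P.2, Dut P.1 P.2))
      (Icc 0 T ×ˢ closure Ω'))
    (A B : ℝ → ℝ)
    (hA : ∀ t, A t = ∫ y in Ω', ((sbar + ‖gradient (u t) y‖ ^ 2) ^ (p / 2) + u t y ^ p))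
    (hB : ∀ t, B t = ∫ y in Ω', u t y ^ q)
    (hApos : ∀ t ∈ Icc 0 T, 0 < A t) (hBpos : ∀ t ∈ Icc 0 T, 0 < B t)
    (hPDE : ∀ t ∈ Ioo 0 T, ∀ x ∈ Ω',
      ut t x =
        vdiv n (fun y => ((sbar + ‖gradient (u t) y‖ ^ 2) ^ ((p - 2) / 2)) •
          gradient (u t) y) x +
        (η (A t) / (deriv η (A t) * B t)) * u t x ^ (q - 1) - u t x ^ (p - 1))
    (hIBP : ∀ t ∈ Ioo 0 T,
      ∫ y in Ω', (sbar + ‖gradient (u t) y‖ ^ 2) ^ ((p - 2) / 2) *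
          (inner ℝ (gradient (u t) y) (Dut t y) : ℝ) =
        -∫ y in Ω', vdiv n (fun z => ((sbar + ‖gradient (u t) z‖ ^ 2) ^ ((p - 2) / 2)) •
            gradient (u t) z) y * ut t y) :
    (∀ t ∈ Ioo 0 T,
      HasDerivAt (fun s => η (A s) / B s ^ (p / q))
        (-(p * deriv η (A t) / B t ^ (p / q)) * ∫ y in Ω', (ut t y) ^ 2) t ∧
      -(p * deriv η (A t) / B t ^ (p / q)) * (∫ y in Ω', (ut t y) ^ 2) ≤ 0) ∧
    AntitoneOn (fun s => η (A s) / B s ^ (p / q)) (Icc 0 T) := by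
  have hΩ : IsCompact (closure Ω') := hΩb.isCompact_closure
  have hΩm : MeasurableSet Ω' := hΩo.measurableSet
  have hu : ContinuousOn (uncurry u) (Icc 0 T ×ˢ closure Ω') :=
    continuous_fst.comp_continuousOn hcont
  have hDu : ContinuousOn (uncurry fun s x => gradient (u s) x) (Icc 0 T ×ˢ closure Ω') :=
    (continuous_fst.comp continuous_snd).comp_continuousOn hcont
  have hu_t : ContinuousOn (uncurry ut) (Icc 0 T ×ˢ closure Ω') :=
    (continuous_fst.comp (continuous_snd.comp continuous_snd)).comp_continuousOn hcont
  have hDu_t : ContinuousOn (uncurry Dut) (Icc 0 T ×ˢ closure Ω') :=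
    (continuous_snd.comp (continuous_snd.comp continuous_snd)).comp_continuousOn hcont
  have hut' : ∀ s ∈ Icc 0 T, ∀ x ∈ Ω', HasDerivAt (u · x) (ut s x) s :=
    fun s hs x hx => hut s hs x (subset_closure hx)
  have hDut' : ∀ s ∈ Icc 0 T, ∀ x ∈ Ω', HasDerivAt (fun s => gradient (u s) x) (Dut s x) s :=
    fun s hs x hx => hDut s hs x (subset_closure hx)
  set E' : ℝ → ℝ := fun t => -(p * deriv η (A t) / B t ^ (p / q)) * ∫ y in Ω', ut t y ^ 2
  have hE' : ∀ t ∈ Ioo 0 T, HasDerivAt (fun s => η (A s) / B s ^ (p / q)) (E' t) t := by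
    intro t ht
    have htI : t ∈ Icc 0 T := Ioo_subset_Icc_self ht
    have hnhds : Icc 0 T ∈ 𝓝 t := Icc_mem_nhds ht.1 ht.2
    have hut_pow : ∀ r : ℝ, ContinuousOn (fun x => u t x ^ r) (closure Ω') :=
      fun r => (hu.uncurry_left t htI).rpow_const_of_pos (hpos t htI)
    have hAt := hasDerivAt_setIntegral_const_add_norm_sq_rpow_add_rpow (μ := volume) (r := p)
      hs isCompact_Icc hnhds hΩ hΩm hu hDu hu_t hDu_t hpos hut' hDut'
    rw [setIntegral_add_mul_eq_of_ibp hΩ hΩm (hPDE t ht) (hIBP t ht)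
      (hu_t.uncurry_left t htI) (hut_pow _) (hut_pow _), ← funext hA] at hAt
    have hBt := hasDerivAt_setIntegral_rpow (μ := volume) (r := q) isCompact_Icc hnhds
      hΩ hΩm hu hu_t hpos hut'
    rw [← funext hB] at hBt
    have hη_diff : HasDerivAt η (deriv η (A t)) (A t) :=
      ((hη.differentiableOn one_ne_zero).differentiableAt
        (Ioi_mem_nhds (hApos t htI))).hasDerivAt
    exact hη_diff.comp_div_rpow_of_multiplier (hη' _ (hApos t htI)).ne' hAt hBt (hBpos t htI)
      (by linarith)
  have hE'_nonpos : ∀ t ∈ Ioo 0 T, E' t ≤ 0 := by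
    intro t ht
    have htI : t ∈ Icc 0 T := Ioo_subset_Icc_self ht
    have hcoef : 0 ≤ p * deriv η (A t) / B t ^ (p / q) :=
      div_nonneg (mul_nonneg (by linarith) (hη' _ (hApos t htI)).le)
        (Real.rpow_nonneg (hBpos t htI).le _)
    exact mul_nonpos_of_nonpos_of_nonneg (neg_nonpos.2 hcoef)
      (setIntegral_nonneg hΩm fun y _ => sq_nonneg _)
  have hAc : ContinuousOn A (Icc 0 T) := by
    rw [show A = _ from funext hA]
    exact continuousOn_setIntegral_const_add_norm_sq_rpow_add_rpow hs isCompact_Icc hΩ hΩm hu hDu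
      hpos
  have hBc : ContinuousOn B (Icc 0 T) := by
    rw [show B = _ from funext hB]
    exact continuousOn_setIntegral_of_continuousOn_prod (F := fun s x => u s x ^ q)
      isCompact_Icc hΩ hΩm (hu.rpow_const_of_pos fun _ hP => hpos _ hP.1 _ hP.2)
  refine ⟨fun t ht => ⟨hE' t ht, hE'_nonpos t ht⟩,
    antitoneOn_of_hasDerivWithinAt_nonpos (f' := E') (convex_Icc 0 T) ?_ ?_ ?_⟩
  · exact (hη.continuousOn.comp hAc hApos).div (hBc.rpow_const_of_pos hBpos)
      fun s hs => (Real.rpow_pos_of_pos (hBpos s hs) _).ne'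
  · simpa only [interior_Icc] using fun t ht => (hE' t ht).hasDerivWithinAt
  · simpa only [interior_Icc] using hE'_nonpos

/-- the parabolic equation
`u_t = div((s̄+|Du|²)^{(p−2)/2}Du) + (η(A)/(η'(A)B))u^{q−1} − u^{p−1}` with Neumann
boundary condition (encoded by the integration-by-parts hypothesis) is a descent
gradient flow for `ℰ(t) = η(A(t))/B(t)^{p/q}`, where
`A(t) = ∫_{Ω'}((s̄+|Du|²)^{p/2}+u^p)` and `B(t) = ∫_{Ω'}u^q`:
`ℰ'(t) = −(p·η'(A(t))/B(t)^{p/q})·∫_{Ω'}u_t² ≤ 0`, so `ℰ` is nonincreasing. -/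
theorem statement16 (n : ℕ)
    (Ω' : Set (Euc n)) (hΩo : IsOpen Ω') (hΩb : Bornology.IsBounded Ω') (hΩne : Ω'.Nonempty)
    (sbar p q : ℝ) (hs : 0 < sbar) (hp : 1 < p) (hpq : p < q)
    (η : ℝ → ℝ) (hη : ContDiffOn ℝ 1 η (Ioi 0)) (hη' : ∀ t > (0 : ℝ), 0 < deriv η t)
    (T : ℝ) (hT : 0 < T)
    (u ut : ℝ → Euc n → ℝ) (Dut : ℝ → Euc n → Euc n)
    (hpos : ∀ t ∈ Icc 0 T, ∀ x ∈ closure Ω', 0 < u t x)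
    (hC2 : ∀ t ∈ Icc 0 T, ContDiffOn ℝ 2 (u t) Ω')
    (hut : ∀ t ∈ Icc 0 T, ∀ x ∈ closure Ω', HasDerivAt (fun s => u s x) (ut t x) t)
    (hDut : ∀ t ∈ Icc 0 T, ∀ x ∈ closure Ω',
      HasDerivAt (fun s => gradient (u s) x) (Dut t x) t)
    (hcont : ContinuousOn
      (fun P : ℝ × Euc n => (u P.1 P.2, gradient (u P.1) P.2, ut P.1 P.2, Dut P.1 P.2))
      (Icc 0 T ×ˢ closure Ω'))
    (A B : ℝ → ℝ)
    (hA : ∀ t, A t = ∫ y in Ω', ((sbar + ‖gradient (u t) y‖ ^ 2) ^ (p / 2) + u t y ^ p))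
    (hB : ∀ t, B t = ∫ y in Ω', u t y ^ q)
    (hApos : ∀ t ∈ Icc 0 T, 0 < A t) (hBpos : ∀ t ∈ Icc 0 T, 0 < B t)
    (hPDE : ∀ t ∈ Ioo 0 T, ∀ x ∈ Ω',
      ut t x =
        vdiv n (fun y => ((sbar + ‖gradient (u t) y‖ ^ 2) ^ ((p - 2) / 2)) •
          gradient (u t) y) x +
        (η (A t) / (deriv η (A t) * B t)) * u t x ^ (q - 1) - u t x ^ (p - 1))
    (hIBP : ∀ t ∈ Ioo 0 T,
      ∫ y in Ω', (sbar + ‖gradient (u t) y‖ ^ 2) ^ ((p - 2) / 2) *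
          (inner ℝ (gradient (u t) y) (Dut t y) : ℝ) =
        -∫ y in Ω', vdiv n (fun z => ((sbar + ‖gradient (u t) z‖ ^ 2) ^ ((p - 2) / 2)) •
            gradient (u t) z) y * ut t y) :
    (∀ t ∈ Ioo 0 T,
      HasDerivAt (fun s => η (A s) / B s ^ (p / q))
        (-(p * deriv η (A t) / B t ^ (p / q)) * ∫ y in Ω', (ut t y) ^ 2) t ∧
      -(p * deriv η (A t) / B t ^ (p / q)) * (∫ y in Ω', (ut t y) ^ 2) ≤ 0) ∧
    AntitoneOn (fun s => η (A s) / B s ^ (p / q)) (Icc 0 T) :=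
  statement16_general n Ω' hΩo hΩb sbar p q hs hp hpq η hη hη' T u ut Dut hpos hut hDut hcont A B hA
    hB hApos hBpos hPDE hIBP
end
end

section
/- Let Ω' ⊆ ℝⁿ be a bounded open set, s̄ > 0, 1 < p, 1 < q, γ ∈ (0,1) and M > 0. Let (u_j) be a sequence of positive functions in C^{1,γ}(closure of Ω') with ‖u_j‖_{C^{1,γ}} ≤ M for all j, let (λ_j) be positive reals with λ_j → λ > 0, and let f_j ∈ L²(Ω') with ‖f_j‖_{L²(Ω')} → 0, such that each u_j is a weak solution of div((s̄+|Du_j|²)^{(p−2)/2}Du_j) − u_j^{p−1} + λ_j·u_j^{q−1} = f_j, i.e. for every φ ∈ C_c^∞(Ω'): −∫_{Ω'}(s̄+|Du_j|²)^{(p−2)/2}⟨Du_j, Dφ⟩ − ∫_{Ω'}u_j^{p−1}φ + λ_j∫_{Ω'}u_j^{q−1}φ = ∫_{Ω'} f_j φ. Then there is a subsequence of (u_j) converging in C¹ on every compact subset of Ω' to a nonnegative function u₀ which is a weak solution of div((s̄+|Du₀|²)^{(p−2)/2}Du₀) − u₀^{p−1} + λ·u₀^{q−1} = 0 in Ω',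 i.e. −∫_{Ω'}(s̄+|Du₀|²)^{(p−2)/2}⟨Du₀, Dφ⟩ − ∫_{Ω'}u₀^{p−1}φ + λ∫_{Ω'}u₀^{q−1}φ = 0 for every φ ∈ C_c^∞(Ω'). -/
open MeasureTheory Metric Set Filter

set_option maxHeartbeats 1000000
set_option synthInstance.maxHeartbeats 400000

noncomputable section

private lemma aux_young (c a b : ℝ) (hc : 0 < c) :
    |a * b| ≤ a ^ 2 / (2 * c) + c * b ^ 2 / 2 := by
  rw [abs_mul]
  rw [div_add_div _ _ (by positivity) (by norm_num), le_div_iff₀ (by positivity)]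
  have key : 0 ≤ a ^ 2 + c ^ 2 * b ^ 2 - 2 * c * (|a| * |b|) := by
    nlinarith [sq_nonneg (|a| - c * |b|), sq_abs a, sq_abs b]
  nlinarith

private lemma aux_delta {γ : ℝ} (hγ : 0 < γ) (C : ℝ) (hC : 0 ≤ C) {ε : ℝ} (hε : 0 < ε) :
    ∃ δ > 0, C * δ ^ γ < ε := by
  refine ⟨(ε / (C + 1)) ^ γ⁻¹, Real.rpow_pos_of_pos (by positivity) _, ?_⟩
  have h1 : ((ε / (C + 1)) ^ γ⁻¹) ^ γ = ε / (C + 1) := by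
    rw [← Real.rpow_mul (by positivity), inv_mul_cancel₀ (ne_of_gt hγ), Real.rpow_one]
  rw [h1, mul_div_assoc', div_lt_iff₀ (by positivity)]
  nlinarith

/-- convergence lemma.  Let `Ω' ⊆ ℝⁿ` be bounded open, `s̄ > 0`,
`1 < p`, `1 < q`, `γ ∈ (0,1)`, `M > 0`.  Let `(u_j)` be positive functions, uniformly
bounded in `C^{1,γ}(Ω̄')` by `M`, `λ_j → λ > 0`, and `f_j ∈ L²(Ω')` with
`‖f_j‖_{L²} → 0`, such that each `u_j` is a weak solution of
`div((s̄+|Du_j|²)^{(p−2)/2}Du_j) − u_j^{p−1} + λ_j u_j^{q−1} = f_j`.  Then a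
subsequence of `(u_j)` converges in `C¹` on every compact subset of `Ω'` to a
nonnegative weak solution `u₀` of
`div((s̄+|Du₀|²)^{(p−2)/2}Du₀) − u₀^{p−1} + λ·u₀^{q−1} = 0` in `Ω'`. -/
theorem statement18 (n : ℕ)
    (Ω' : Set (Euc n)) (hΩo : IsOpen Ω') (hΩb : Bornology.IsBounded Ω') (hΩne : Ω'.Nonempty)
    (sbar p q γ M : ℝ) (hs : 0 < sbar) (hp : 1 < p) (hq : 1 < q)
    (hγ : γ ∈ Ioo (0 : ℝ) 1) (hM : 0 < M)
    (u : ℕ → Euc n → ℝ) (lam : ℕ → ℝ) (lam₀ : ℝ) (f : ℕ → Euc n → ℝ)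
    (hupos : ∀ j, ∀ x ∈ closure Ω', 0 < u j x)
    (huC1 : ∀ j, ContDiffOn ℝ 1 (u j) (closure Ω'))
    (hbound : ∀ j, ∀ x ∈ closure Ω', |u j x| ≤ M ∧ ‖gradient (u j) x‖ ≤ M)
    (hholder : ∀ j, ∀ x ∈ closure Ω', ∀ y ∈ closure Ω',
      ‖gradient (u j) x - gradient (u j) y‖ ≤ M * ‖x - y‖ ^ γ)
    (hlam : ∀ j, 0 < lam j) (hlam₀ : 0 < lam₀)
    (hlamconv : Tendsto lam atTop (nhds lam₀))
    (hfL2 : ∀ j, MemLp (f j) 2 (volume.restrict Ω'))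
    (hfconv : Tendsto (fun j => ∫ x in Ω', (f j x) ^ 2) atTop (nhds 0))
    (hweak : ∀ j, ∀ φ : Euc n → ℝ, ContDiff ℝ (⊤ : ℕ∞) φ → HasCompactSupport φ →
      tsupport φ ⊆ Ω' →
      (-∫ x in Ω', (sbar + ‖gradient (u j) x‖ ^ 2) ^ ((p - 2) / 2) *
          (inner ℝ (gradient (u j) x) (gradient φ x) : ℝ))
        - (∫ x in Ω', u j x ^ (p - 1) * φ x)
        + lam j * ∫ x in Ω', u j x ^ (q - 1) * φ x
        = ∫ x in Ω', f j x * φ x) :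
    ∃ σ : ℕ → ℕ, StrictMono σ ∧ ∃ u₀ : Euc n → ℝ,
      (∀ x ∈ Ω', 0 ≤ u₀ x) ∧
      (∀ K ⊆ Ω', IsCompact K →
        TendstoUniformlyOn (fun j => u (σ j)) u₀ atTop K ∧
        TendstoUniformlyOn (fun j => gradient (u (σ j))) (gradient u₀) atTop K) ∧
      ∀ φ : Euc n → ℝ, ContDiff ℝ (⊤ : ℕ∞) φ → HasCompactSupport φ → tsupport φ ⊆ Ω' →
        (-∫ x in Ω', (sbar + ‖gradient u₀ x‖ ^ 2) ^ ((p - 2) / 2) *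
            (inner ℝ (gradient u₀ x) (gradient φ x) : ℝ))
          - (∫ x in Ω', u₀ x ^ (p - 1) * φ x)
          + lam₀ * ∫ x in Ω', u₀ x ^ (q - 1) * φ x = 0 := by
  classical
  obtain ⟨hγ0, hγ1⟩ := hγ
  have hClcomp : IsCompact (closure Ω') := hΩb.isCompact_closure
  have hsub : Ω' ⊆ closure Ω' := subset_closure
  have hΩmeas : MeasurableSet Ω' := hΩo.measurableSet
  -- the weight function d
  set d : Euc n → ℝ := fun x => if (Ω'ᶜ).Nonempty then infDist x Ω'ᶜ else 1 with hd_def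
  have hdlip : LipschitzWith 1 d := by
    by_cases hc : (Ω'ᶜ).Nonempty
    · simpa [hd_def, hc] using lipschitz_infDist_pt (Ω'ᶜ)
    · have hconst : d = fun _ => (1 : ℝ) := by funext x; simp [hd_def, hc]
      rw [hconst]; exact (LipschitzWith.const (1 : ℝ)).weaken zero_le_one
  have hdnonneg : ∀ x, 0 ≤ d x := by
    intro x; by_cases hc : (Ω'ᶜ).Nonempty <;> simp [hd_def, hc, infDist_nonneg]
  have hdpos : ∀ x ∈ Ω', 0 < d x := by
    intro x hx
    by_cases hc : (Ω'ᶜ).Nonempty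
    · simp only [hd_def, hc, if_true]
      exact (IsClosed.notMem_iff_infDist_pos (isClosed_compl_iff.mpr hΩo) hc).mp (by simp [hx])
    · simp [hd_def, hc]
  have hdpos' : ∀ x, 0 < d x → x ∈ Ω' := by
    intro x hx
    by_cases hc : (Ω'ᶜ).Nonempty
    · simp only [hd_def, hc, if_true] at hx
      by_contra hmem
      rw [infDist_zero_of_mem (by simpa using hmem)] at hx
      exact lt_irrefl _ hx
    · exact (compl_empty_iff.mp (not_nonempty_iff_eq_empty.mp hc)) ▸ mem_univ x
  have hdball : ∀ x, ball x (d x) ⊆ Ω' := by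
    intro x y hy
    by_cases hc : (Ω'ᶜ).Nonempty
    · simp only [hd_def, hc, if_true, mem_ball] at hy
      by_contra hmem
      exact absurd (infDist_le_dist_of_mem (s := Ω'ᶜ) (by simpa using hmem)) 
        (by rw [dist_comm] at hy; exact not_le.mpr hy)
    · have := not_nonempty_iff_eq_empty.mp hc
      simp only [compl_empty_iff] at this
      simp [this]
  have hdcont : Continuous d := hdlip.continuous
  obtain ⟨D, hD0, hDle⟩ : ∃ D : ℝ, 0 < D ∧ ∀ x ∈ closure Ω', d x ≤ D := by
    obtain ⟨x₀, hx₀, hmax⟩ := hClcomp.exists_isMaxOn (hΩne.mono hsub) hdcont.continuousOn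
    refine ⟨d x₀ + 1, by linarith [hdnonneg x₀], fun x hx => ?_⟩
    have h3 : d x ≤ d x₀ := hmax hx
    linarith
  -- basic differentiability facts
  have hdiffAt : ∀ j, ∀ x ∈ Ω', HasFDerivAt (u j)
      (InnerProductSpace.toDual ℝ (Euc n) (gradient (u j) x)) x := by
    intro j x hx
    have hdiff : DifferentiableAt ℝ (u j) x :=
      ((huC1 j).differentiableOn one_ne_zero).differentiableAt
        (Filter.mem_of_superset (hΩo.mem_nhds hx) hsub)
    exact hasGradientAt_iff_hasFDerivAt.mp hdiff.hasGradientAt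
  -- local Lipschitz estimate via mean value theorem
  have hMVT : ∀ j, ∀ y ∈ Ω', ∀ x ∈ ball y (d y), |u j x - u j y| ≤ M * ‖x - y‖ := by
    intro j y hy x hx
    have := Convex.norm_image_sub_le_of_norm_hasFDerivWithin_le
      (f := u j) (f' := fun z => InnerProductSpace.toDual ℝ (Euc n) (gradient (u j) z))
      (s := ball y (d y)) (C := M)
      (fun z hz => (hdiffAt j z (hdball y hz)).hasFDerivWithinAt)
      (fun z hz => by
        rw [LinearIsometryEquiv.norm_map]
        exact (hbound j z (hsub (hdball y hz))).2)
      (convex_ball y (d y)) (mem_ball_self (hdpos y hy)) hx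
    simpa [Real.norm_eq_abs] using this
  -- continuity of gradients on the closure
  have hgcont : ∀ j, ContinuousOn (gradient (u j)) (closure Ω') := by
    intro j x hx
    rw [Metric.continuousWithinAt_iff]
    intro ε hε
    obtain ⟨δ, hδ, hδε⟩ := aux_delta hγ0 M hM.le hε
    refine ⟨δ, hδ, fun y hy hdist => ?_⟩
    rw [dist_eq_norm]
    refine lt_of_le_of_lt (hholder j y hy x hx) (lt_of_le_of_lt ?_ hδε)
    have h1 : ‖y - x‖ ^ γ ≤ δ ^ γ :=
      Real.rpow_le_rpow (norm_nonneg _) (by rw [← dist_eq_norm]; exact hdist.le) hγ0.le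
    nlinarith
  have hucont : ∀ j, ContinuousOn (u j) (closure Ω') := fun j => (huC1 j).continuousOn
  -- the equicontinuity constant
  set L1 : ℝ := M + D * M + 2 * M with hL1_def
  have hL1pos : 0 < L1 := by positivity
  have hWlipest : ∀ j, ∀ x ∈ closure Ω', ∀ y ∈ closure Ω',
      |d x * u j x - d y * u j y| ≤ L1 * ‖x - y‖ := by
    intro j x hx y hy
    have hux := (hbound j x hx).1
    have huy := (hbound j y hy).1
    have hkey : d x * u j x - d y * u j y = (d x - d y) * u j x + d y * (u j x - u j y) := by ring
    have hdd : |d x - d y| ≤ ‖x - y‖ := by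
      simpa [Real.dist_eq, dist_eq_norm] using hdlip.dist_le_mul x y
    have ht1 : |(d x - d y) * u j x| ≤ ‖x - y‖ * M := by
      rw [abs_mul]
      exact mul_le_mul hdd hux (abs_nonneg _) (norm_nonneg _)
    have ht2 : |d y * (u j x - u j y)| ≤ (D * M + 2 * M) * ‖x - y‖ := by
      rw [abs_mul, abs_of_nonneg (hdnonneg y)]
      rcases le_or_gt (d y) ‖x - y‖ with hle | hlt
      · have h2 : |u j x - u j y| ≤ 2 * M := by
          calc |u j x - u j y| ≤ |u j x| + |u j y| := abs_sub _ _
          _ ≤ 2 * M := by linarith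
        have e1 : d y * |u j x - u j y| ≤ d y * (2 * M) :=
          mul_le_mul_of_nonneg_left h2 (hdnonneg y)
        have e2 : d y * (2 * M) ≤ ‖x - y‖ * (2 * M) :=
          mul_le_mul_of_nonneg_right hle (by positivity)
        have e3 : 0 ≤ D * M * ‖x - y‖ := by positivity
        nlinarith
      · have hyΩ : y ∈ Ω' := hdpos' y (lt_of_le_of_lt (norm_nonneg _) hlt)
        have hxball : x ∈ ball y (d y) := by rwa [mem_ball, dist_eq_norm]
        have h2 := hMVT j y hyΩ x hxball
        have h3 : d y ≤ D := hDle y hy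
        nlinarith [norm_nonneg (x - y), hdnonneg y, abs_nonneg (u j x - u j y), mul_le_mul h3 h2 (abs_nonneg _) hD0.le]
    calc |d x * u j x - d y * u j y| ≤ |(d x - d y) * u j x| + |d y * (u j x - u j y)| := by
          rw [hkey]; exact abs_add_le _ _
      _ ≤ ‖x - y‖ * M + (D * M + 2 * M) * ‖x - y‖ := add_le_add ht1 ht2
      _ = L1 * ‖x - y‖ := by rw [hL1_def]; ring
  -- the bounded continuous functions
  haveI : CompactSpace (closure Ω') := isCompact_iff_compactSpace.mp hClcomp
  set W : ℕ → BoundedContinuousFunction (closure Ω') (ℝ × Euc n) := fun j =>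
    BoundedContinuousFunction.mkOfCompact
      ⟨(closure Ω').restrict (fun x => (d x * u j x, gradient (u j) x)),
        (((hdcont.continuousOn.mul (hucont j)).prodMk (hgcont j))).restrict⟩ with hW_def
  have hWapply : ∀ j, ∀ z : closure Ω', W j z = (d z.1 * u j z.1, gradient (u j) z.1) :=
    fun j z => rfl
  -- Arzelà–Ascoli
  have hAA : IsCompact (closure (Set.range W)) := by
    apply BoundedContinuousFunction.arzela_ascoli (closedBall (0 : ℝ × Euc n) (D * M + M))
      (isCompact_closedBall _ _)
    · rintro F z ⟨j, rfl⟩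
      rw [hWapply, mem_closedBall_zero_iff]
      rw [Prod.norm_def]
      apply max_le
      · have h1 : |d z.1 * u j z.1| ≤ D * M := by
          rw [abs_mul, abs_of_nonneg (hdnonneg z.1)]
          exact mul_le_mul (hDle z.1 z.2) (hbound j z.1 z.2).1 (abs_nonneg _) hD0.le
        calc ‖d z.1 * u j z.1‖ = |d z.1 * u j z.1| := rfl
          _ ≤ D * M + M := by linarith
      · calc ‖gradient (u j) z.1‖ ≤ M := (hbound j z.1 z.2).2
          _ ≤ D * M + M := by nlinarith
    · intro z
      rw [Metric.equicontinuousAt_iff]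
      intro ε hε
      obtain ⟨δ2, hδ2, hδ2ε⟩ := aux_delta hγ0 M hM.le hε
      refine ⟨min (ε / (2 * L1)) δ2, lt_min (by positivity) hδ2, fun w hw i => ?_⟩
      obtain ⟨j, hj⟩ := i.2
      have hiw : ∀ v : closure Ω', (i : BoundedContinuousFunction (closure Ω') (ℝ × Euc n)) v
          = (d v.1 * u j v.1, gradient (u j) v.1) := by
        intro v; rw [← hj, hWapply]
      rw [Prod.dist_eq, hiw z, hiw w]
      have hdzw : dist z.1 w.1 < min (ε / (2 * L1)) δ2 := by
        rwa [← Subtype.dist_eq, dist_comm]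
      have hnzw : ‖z.1 - w.1‖ < min (ε / (2 * L1)) δ2 := by rwa [← dist_eq_norm]
      apply max_lt
      · rw [Real.dist_eq]
        refine lt_of_le_of_lt (hWlipest j z.1 z.2 w.1 w.2) ?_
        have h1 : ‖z.1 - w.1‖ < ε / (2 * L1) := lt_of_lt_of_le hnzw (min_le_left _ _)
        calc L1 * ‖z.1 - w.1‖ ≤ L1 * (ε / (2 * L1)) :=
              mul_le_mul_of_nonneg_left h1.le hL1pos.le
          _ = ε / 2 := by field_simp
          _ < ε := by linarith
      · rw [dist_eq_norm]
        refine lt_of_le_of_lt (hholder j z.1 z.2 w.1 w.2) (lt_of_le_of_lt ?_ hδ2ε)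
        have h1 : ‖z.1 - w.1‖ ^ γ ≤ δ2 ^ γ :=
          Real.rpow_le_rpow (norm_nonneg _) (lt_of_lt_of_le hnzw (min_le_right _ _)).le hγ0.le
        nlinarith
  obtain ⟨Wlim, hWlimmem, σ, hσ, hconv⟩ :=
    hAA.tendsto_subseq (fun j => subset_closure (mem_range_self (f := W) j))
  have hWtu : TendstoUniformly (fun j => ⇑(W (σ j))) (⇑Wlim) atTop :=
    BoundedContinuousFunction.tendsto_iff_tendstoUniformly.mp hconv
  -- limit functions
  set G : Euc n → Euc n := fun x => if hx : x ∈ closure Ω' then (Wlim ⟨x, hx⟩).2 else 0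
    with hG_def
  set h₀ : Euc n → ℝ := fun x => if hx : x ∈ closure Ω' then (Wlim ⟨x, hx⟩).1 else 0
    with hh₀_def
  set u₀ : Euc n → ℝ := fun x => if x ∈ Ω' then h₀ x / d x else 0 with hu₀_def
  -- pointwise convergence
  have hptw : ∀ x (hx : x ∈ closure Ω'),
      Tendsto (fun j => (d x * u (σ j) x, gradient (u (σ j)) x)) atTop (nhds (h₀ x, G x)) := by
    intro x hx
    have := hWtu.tendsto_at ⟨x, hx⟩
    simp only [hWapply] at this
    simpa only [hG_def, hh₀_def, dif_pos hx] using this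
  have hgradptw : ∀ x ∈ closure Ω', Tendsto (fun j => gradient (u (σ j)) x) atTop (nhds (G x)) :=
    fun x hx => ((continuous_snd.tendsto _).comp (hptw x hx))
  have hduptw : ∀ x ∈ closure Ω', Tendsto (fun j => d x * u (σ j) x) atTop (nhds (h₀ x)) :=
    fun x hx => ((continuous_fst.tendsto _).comp (hptw x hx))
  have huptw : ∀ x ∈ Ω', Tendsto (fun j => u (σ j) x) atTop (nhds (u₀ x)) := by
    intro x hx
    have h1 := (hduptw x (hsub hx)).div_const (d x)
    have hdx := hdpos x hx
    simp only [mul_div_cancel_left₀ _ (ne_of_gt hdx)] at h1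
    simpa only [hu₀_def, if_pos hx] using h1
  -- nonnegativity
  have hu₀nonneg : ∀ x ∈ Ω', 0 ≤ u₀ x := fun x hx =>
    ge_of_tendsto' (huptw x hx) (fun j => (hupos (σ j) x (hsub hx)).le)
  have hGval : ∀ x (hx : x ∈ closure Ω'), G x = (Wlim ⟨x, hx⟩).2 := fun x hx => dif_pos hx
  have hh₀val : ∀ x (hx : x ∈ closure Ω'), h₀ x = (Wlim ⟨x, hx⟩).1 := fun x hx => dif_pos hx
  -- uniform convergence of the gradients on subsets of the closure
  have hgradunif : ∀ K ⊆ closure Ω',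
      TendstoUniformlyOn (fun j => gradient (u (σ j))) G atTop K := by
    intro K hK
    rw [Metric.tendstoUniformlyOn_iff]
    intro ε hε
    filter_upwards [Metric.tendstoUniformly_iff.mp hWtu ε hε] with j hj x hx
    have h1 := hj ⟨x, hK hx⟩
    rw [hWapply] at h1
    refine lt_of_le_of_lt ?_ h1
    calc dist (G x) (gradient (u (σ j)) x)
        = dist (Wlim ⟨x, hK hx⟩).2 (d x * u (σ j) x, gradient (u (σ j)) x).2 := by
          rw [hGval x (hK hx)]
      _ ≤ dist (Wlim ⟨x, hK hx⟩) (d x * u (σ j) x, gradient (u (σ j)) x) := by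
          rw [Prod.dist_eq]; exact le_max_right _ _
  -- uniform convergence of the functions on compact subsets of Ω'
  have huunif : ∀ K ⊆ Ω', IsCompact K →
      TendstoUniformlyOn (fun j => u (σ j)) u₀ atTop K := by
    intro K hK hKc
    rcases K.eq_empty_or_nonempty with rfl | hKne
    · exact tendstoUniformlyOn_empty
    obtain ⟨z0, hz0K, hz0min⟩ := hKc.exists_isMinOn hKne (hdcont.continuousOn)
    have hδ : 0 < d z0 := hdpos z0 (hK hz0K)
    rw [Metric.tendstoUniformlyOn_iff]
    intro ε hε
    filter_upwards [Metric.tendstoUniformly_iff.mp hWtu (ε * d z0) (by positivity)] with j hj x hx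
    have hxΩ : x ∈ Ω' := hK hx
    have hxCl : x ∈ closure Ω' := hsub hxΩ
    have h1 := hj ⟨x, hxCl⟩
    rw [hWapply] at h1
    have hnum : |h₀ x - d x * u (σ j) x| < ε * d z0 := by
      refine lt_of_le_of_lt ?_ h1
      calc |h₀ x - d x * u (σ j) x|
          = dist (Wlim ⟨x, hxCl⟩).1 (d x * u (σ j) x, gradient (u (σ j)) x).1 := by
            rw [hh₀val x hxCl, Real.dist_eq]
        _ ≤ dist (Wlim ⟨x, hxCl⟩) (d x * u (σ j) x, gradient (u (σ j)) x) := by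
            rw [Prod.dist_eq]; exact le_max_left _ _
    have hdx : 0 < d x := hdpos x hxΩ
    have hdxδ : d z0 ≤ d x := isMinOn_iff.mp hz0min x hx
    rw [Real.dist_eq]
    have hsplit : u₀ x - u (σ j) x = (h₀ x - d x * u (σ j) x) / d x := by
      rw [hu₀_def]
      simp only [if_pos hxΩ]
      field_simp
    rw [hsplit, abs_div, abs_of_pos hdx]
    calc |h₀ x - d x * u (σ j) x| / d x ≤ |h₀ x - d x * u (σ j) x| / d z0 := by
          gcongr
      _ < (ε * d z0) / d z0 := by gcongr
      _ = ε := by field_simp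
  -- the limit is differentiable with gradient G
  have hderiv : ∀ x ∈ Ω', HasGradientAt u₀ (G x) x := by
    intro x hx
    obtain ⟨ε, hε, hball⟩ := Metric.mem_nhds_iff.mp (hΩo.mem_nhds hx)
    have hbΩ : ball x (ε / 2) ⊆ Ω' := fun z hz =>
      hball (mem_ball.mpr (lt_of_lt_of_le (mem_ball.mp hz) (by linarith)))
    rw [hasGradientAt_iff_hasFDerivAt]
    apply hasFDerivAt_of_tendstoUniformlyOn (f := fun j => u (σ j))
        (f' := fun j z => InnerProductSpace.toDual ℝ (Euc n) (gradient (u (σ j)) z))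
        (g' := fun z => InnerProductSpace.toDual ℝ (Euc n) (G z))
        (isOpen_ball) ?_ (fun j z hz => hdiffAt (σ j) z (hbΩ hz))
        (fun z hz => huptw z (hbΩ hz)) (mem_ball_self (by positivity))
    have h1 := hgradunif (ball x (ε / 2)) (hbΩ.trans hsub)
    rw [Metric.tendstoUniformlyOn_iff] at h1 ⊢
    intro ε' hε'
    filter_upwards [h1 ε' hε'] with j hj z hz
    rw [LinearIsometryEquiv.dist_map]
    exact hj z hz
  have hgradeq : ∀ x ∈ Ω', gradient u₀ x = G x := fun x hx => (hderiv x hx).gradient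
  -- bounds on the limits
  have hGb : ∀ x ∈ closure Ω', ‖G x‖ ≤ M := fun x hx =>
    le_of_tendsto (hgradptw x hx).norm
      (Filter.Eventually.of_forall fun j => (hbound (σ j) x hx).2)
  have hu₀b : ∀ x ∈ Ω', |u₀ x| ≤ M := fun x hx =>
    le_of_tendsto (huptw x hx).abs
      (Filter.Eventually.of_forall fun j => (hbound (σ j) x (hsub hx)).1)
  -- finiteness of the measure
  haveI : IsFiniteMeasure (volume.restrict Ω') :=
    ⟨by rw [Measure.restrict_apply_univ]; exact hΩb.measure_lt_top⟩
  -- assemble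
  refine ⟨σ, hσ, u₀, hu₀nonneg, fun K hK hKc => ⟨huunif K hK hKc,
    (hgradunif K (hK.trans hsub)).congr_right fun x hx => (hgradeq x (hK hx)).symm⟩, ?_⟩
  -- the limit weak equation
  intro φ hφ1 hφ2 hφ3
  set Φ : Euc n → Euc n := gradient φ with hΦ_def
  have hφc : Continuous φ := hφ1.continuous
  have hΦc : Continuous Φ := by
    have : Φ = fun x => (InnerProductSpace.toDual ℝ (Euc n)).symm (fderiv ℝ φ x) := rfl
    rw [this]
    exact (InnerProductSpace.toDual ℝ (Euc n)).symm.continuous.comp (hφ1.continuous_fderiv (by simp))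
  obtain ⟨Cφ, hCφ, hCφ0⟩ : ∃ C, (∀ x, |φ x| ≤ C ∧ ‖Φ x‖ ≤ C) ∧ 0 ≤ C := by
    obtain ⟨C1, hC1⟩ := hφc.bounded_above_of_compact_support hφ2
    have hΦsupp : HasCompactSupport Φ := by
      have : Φ = (⇑(InnerProductSpace.toDual ℝ (Euc n)).symm) ∘ (fderiv ℝ φ) := rfl
      rw [this]
      exact (hφ2.fderiv ℝ).comp_left (map_zero _)
    obtain ⟨C2, hC2⟩ := hΦc.bounded_above_of_compact_support hΦsupp
    refine ⟨max C1 C2, fun x => ⟨?_, ?_⟩, ?_⟩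
    · exact le_trans (by rw [← Real.norm_eq_abs]; exact hC1 x) (le_max_left _ _)
    · exact le_trans (hC2 x) (le_max_right _ _)
    · exact le_trans (abs_nonneg (φ 0)) (le_trans (by rw [← Real.norm_eq_abs]; exact hC1 0)
        (le_max_left _ _))
  -- bound for the rpow factor
  set Ca : ℝ := max (sbar ^ ((p - 2) / 2)) ((sbar + M ^ 2) ^ ((p - 2) / 2)) with hCa_def
  have hCa0 : 0 ≤ Ca := le_trans (Real.rpow_pos_of_pos hs _).le (le_max_left _ _)
  have hbase : ∀ v : Euc n, ‖v‖ ≤ M → (sbar + ‖v‖ ^ 2) ^ ((p - 2) / 2) ≤ Ca := by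
    intro v hv
    have h1 : sbar ≤ sbar + ‖v‖ ^ 2 := le_add_of_nonneg_right (by positivity)
    have h2 : sbar + ‖v‖ ^ 2 ≤ sbar + M ^ 2 := by nlinarith [norm_nonneg v]
    rcases le_or_gt 0 ((p - 2) / 2) with he | he
    · exact le_trans (Real.rpow_le_rpow (by positivity) h2 he) (le_max_right _ _)
    · exact le_trans (Real.rpow_le_rpow_of_nonpos hs h1 he.le) (le_max_left _ _)
  -- convergence of the gradient term
  have hAconv : Tendsto (fun j => ∫ x in Ω',
      (sbar + ‖gradient (u (σ j)) x‖ ^ 2) ^ ((p - 2) / 2) *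
        (inner ℝ (gradient (u (σ j)) x) (Φ x) : ℝ)) atTop
      (nhds (∫ x in Ω', (sbar + ‖G x‖ ^ 2) ^ ((p - 2) / 2) * (inner ℝ (G x) (Φ x) : ℝ))) := by
    apply tendsto_integral_of_dominated_convergence (bound := fun _ => Ca * (M * Cφ))
    · intro j
      apply ContinuousOn.aestronglyMeasurable _ hΩmeas
      have hg := (hgcont (σ j)).mono hsub
      exact ((continuousOn_const.add ((hg.norm).pow 2)).rpow_const
        (fun x hx => Or.inl (ne_of_gt (add_pos_of_pos_of_nonneg hs (sq_nonneg _))))).mul (hg.inner hΦc.continuousOn)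
    · exact integrable_const _
    · intro j
      rw [ae_restrict_iff' hΩmeas]
      apply ae_of_all
      intro x hx
      have hgb := (hbound (σ j) x (hsub hx)).2
      rw [Real.norm_eq_abs, abs_mul,
        abs_of_pos (Real.rpow_pos_of_pos (by positivity) ((p - 2) / 2))]
      have h2 : |(inner ℝ (gradient (u (σ j)) x) (Φ x) : ℝ)| ≤ M * Cφ :=
        le_trans (abs_real_inner_le_norm _ _)
          (mul_le_mul hgb (hCφ x).2 (norm_nonneg _) hM.le)
      exact mul_le_mul (hbase _ hgb) h2 (abs_nonneg _) hCa0
    · rw [ae_restrict_iff' hΩmeas]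
      apply ae_of_all
      intro x hx
      have hgt := hgradptw x (hsub hx)
      exact ((tendsto_const_nhds.add ((hgt.norm).pow 2)).rpow_const
        (Or.inl (by positivity))).mul (hgt.inner tendsto_const_nhds)
  -- convergence of the power terms
  have hpowconv : ∀ r : ℝ, 0 ≤ r → Tendsto (fun j => ∫ x in Ω', u (σ j) x ^ r * φ x) atTop
      (nhds (∫ x in Ω', u₀ x ^ r * φ x)) := by
    intro r hr
    apply tendsto_integral_of_dominated_convergence (bound := fun _ => M ^ r * Cφ)
    · intro j
      apply ContinuousOn.aestronglyMeasurable _ hΩmeas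
      exact (((hucont (σ j)).mono hsub).rpow_const (fun x hx => Or.inr hr)).mul
        hφc.continuousOn
    · exact integrable_const _
    · intro j
      rw [ae_restrict_iff' hΩmeas]
      apply ae_of_all
      intro x hx
      have hu0 := hupos (σ j) x (hsub hx)
      have huM := (hbound (σ j) x (hsub hx)).1
      rw [Real.norm_eq_abs, abs_mul, abs_of_pos (Real.rpow_pos_of_pos hu0 r)]
      have h1 : u (σ j) x ^ r ≤ M ^ r := Real.rpow_le_rpow hu0.le (le_of_abs_le huM) hr
      exact mul_le_mul h1 (hCφ x).1 (abs_nonneg _) (Real.rpow_nonneg hM.le r)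
    · rw [ae_restrict_iff' hΩmeas]
      apply ae_of_all
      intro x hx
      exact ((huptw x hx).rpow_const (Or.inr hr)).mul tendsto_const_nhds
  have hBconv := hpowconv (p - 1) (by linarith)
  have hCconv := hpowconv (q - 1) (by linarith)
  -- convergence of the right-hand side to zero
  have hRconv : Tendsto (fun j => ∫ x in Ω', f (σ j) x * φ x) atTop (nhds 0) := by
    have hφ2supp : HasCompactSupport (fun x => φ x ^ 2) := by
      have : (fun x => φ x ^ 2) = (fun t : ℝ => t ^ 2) ∘ φ := rfl
      rw [this]
      exact hφ2.comp_left (by norm_num)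
    have hφ2int : Integrable (fun x => φ x ^ 2) (volume.restrict Ω') :=
      ((hφc.pow 2).integrable_of_hasCompactSupport hφ2supp).restrict
    set Iφ : ℝ := ∫ x in Ω', φ x ^ 2 with hIφ_def
    have hIφ0 : 0 ≤ Iφ := integral_nonneg fun x => sq_nonneg _
    rw [NormedAddCommGroup.tendsto_nhds_zero]
    intro ε hε
    set c : ℝ := ε / (2 * (Iφ + 1)) with hc_def
    have hc : 0 < c := by positivity
    have hfev : ∀ᶠ j in atTop, (∫ x in Ω', f (σ j) x ^ 2) < c * ε :=
      (hfconv.comp hσ.tendsto_atTop).eventually_lt_const (by positivity)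
    filter_upwards [hfev] with j hj
    have hfj2 : Integrable (fun x => f (σ j) x ^ 2) (volume.restrict Ω') :=
      (hfL2 (σ j)).integrable_sq
    have hfj2nn : 0 ≤ ∫ x in Ω', f (σ j) x ^ 2 := integral_nonneg fun x => sq_nonneg _
    have hb1 : Integrable (fun x => f (σ j) x ^ 2 / (2 * c)) (volume.restrict Ω') :=
      hfj2.div_const _
    have hb2 : Integrable (fun x => c * φ x ^ 2 / 2) (volume.restrict Ω') :=
      (hφ2int.const_mul _).div_const _
    have hfφmeas : AEStronglyMeasurable (fun x => f (σ j) x * φ x) (volume.restrict Ω') :=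
      (hfL2 (σ j)).aestronglyMeasurable.mul hφc.aestronglyMeasurable
    have hptbound : ∀ x : Euc n, ‖f (σ j) x * φ x‖ ≤
        f (σ j) x ^ 2 / (2 * c) + c * φ x ^ 2 / 2 := by
      intro x
      rw [Real.norm_eq_abs]
      exact aux_young c _ _ hc
    have hfφint : Integrable (fun x => f (σ j) x * φ x) (volume.restrict Ω') :=
      (hb1.add hb2).mono' hfφmeas (ae_of_all _ hptbound)
    have h1 : ‖∫ x in Ω', f (σ j) x * φ x‖ ≤
        ∫ x in Ω', (f (σ j) x ^ 2 / (2 * c) + c * φ x ^ 2 / 2) := by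
      refine le_trans (norm_integral_le_integral_norm _) ?_
      exact integral_mono hfφint.norm (hb1.add hb2) hptbound
    rw [integral_add hb1 hb2, MeasureTheory.integral_div, MeasureTheory.integral_div,
      MeasureTheory.integral_const_mul] at h1
    have h2 : (∫ x in Ω', f (σ j) x ^ 2) / (2 * c) < (c * ε) / (2 * c) := by gcongr
    have h3 : (c * ε) / (2 * c) = ε / 2 := by field_simp
    have h4 : c * Iφ / 2 < ε / 2 := by
      rw [hc_def]
      rw [div_lt_div_iff₀ (by norm_num) (by norm_num)]
      have : ε / (2 * (Iφ + 1)) * (Iφ + 1) = ε / 2 := by field_simp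
      nlinarith [mul_pos hε (by positivity : (0:ℝ) < Iφ + 1)]
    calc ‖∫ x in Ω', f (σ j) x * φ x‖
        ≤ (∫ x in Ω', f (σ j) x ^ 2) / (2 * c) + c * Iφ / 2 := h1
      _ < ε / 2 + ε / 2 := add_lt_add (h3 ▸ h2) h4
      _ = ε := by ring
  -- pass to the limit in the weak formulation
  have hfinal : ∀ j,
      (-∫ x in Ω', (sbar + ‖gradient (u (σ j)) x‖ ^ 2) ^ ((p - 2) / 2) *
          (inner ℝ (gradient (u (σ j)) x) (Φ x) : ℝ))
        - (∫ x in Ω', u (σ j) x ^ (p - 1) * φ x)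
        + lam (σ j) * ∫ x in Ω', u (σ j) x ^ (q - 1) * φ x
        = ∫ x in Ω', f (σ j) x * φ x := fun j => hweak (σ j) φ hφ1 hφ2 hφ3
  have hlamσ : Tendsto (fun j => lam (σ j)) atTop (nhds lam₀) :=
    hlamconv.comp hσ.tendsto_atTop
  have hlhs : Tendsto (fun j =>
      (-∫ x in Ω', (sbar + ‖gradient (u (σ j)) x‖ ^ 2) ^ ((p - 2) / 2) *
          (inner ℝ (gradient (u (σ j)) x) (Φ x) : ℝ))
        - (∫ x in Ω', u (σ j) x ^ (p - 1) * φ x)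
        + lam (σ j) * ∫ x in Ω', u (σ j) x ^ (q - 1) * φ x) atTop
      (nhds ((-∫ x in Ω', (sbar + ‖G x‖ ^ 2) ^ ((p - 2) / 2) * (inner ℝ (G x) (Φ x) : ℝ))
        - (∫ x in Ω', u₀ x ^ (p - 1) * φ x)
        + lam₀ * ∫ x in Ω', u₀ x ^ (q - 1) * φ x)) :=
    (hAconv.neg.sub hBconv).add (hlamσ.mul hCconv)
  have hrhs : Tendsto (fun j =>
      (-∫ x in Ω', (sbar + ‖gradient (u (σ j)) x‖ ^ 2) ^ ((p - 2) / 2) *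
          (inner ℝ (gradient (u (σ j)) x) (Φ x) : ℝ))
        - (∫ x in Ω', u (σ j) x ^ (p - 1) * φ x)
        + lam (σ j) * ∫ x in Ω', u (σ j) x ^ (q - 1) * φ x) atTop (nhds 0) :=
    hRconv.congr fun j => (hfinal j).symm
  have h0 : (-∫ x in Ω', (sbar + ‖G x‖ ^ 2) ^ ((p - 2) / 2) * (inner ℝ (G x) (Φ x) : ℝ))
      - (∫ x in Ω', u₀ x ^ (p - 1) * φ x)
      + lam₀ * ∫ x in Ω', u₀ x ^ (q - 1) * φ x = 0 :=
    tendsto_nhds_unique hlhs hrhs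
  have hswap : (∫ x in Ω', (sbar + ‖gradient u₀ x‖ ^ 2) ^ ((p - 2) / 2) *
      (inner ℝ (gradient u₀ x) (Φ x) : ℝ))
      = ∫ x in Ω', (sbar + ‖G x‖ ^ 2) ^ ((p - 2) / 2) * (inner ℝ (G x) (Φ x) : ℝ) :=
    setIntegral_congr_fun hΩmeas fun x hx => by rw [hgradeq x hx]
  rw [hswap]
  exact h0


end
end
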